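/- arXiv:2307.01049 — 4 statements merged into one kernel-verified Lean document; each statement's English description precedes it below -/
import Mathlib

section
/- Under Assumptions 1.1–1.4, for every a ∈ ℝ and every pair (d,d') ∈ {0,1}², the cumulative distribution function of the potential outcome Y(d, M(d')) at a is identified as P(Y(d, M(d')) ≤ a) = E[ g_{d,d',a}(X) ], where g_{d,d',a}(x) := E[ F_a(d, M, X) | D = d', X = x ] = Σ_{m∈𝓜} F_a(d, m, x) · P(M = m | D = d', X = x). -/
/-!
Write `r m = P(Y(d,m) ≤ a | X)`, `q m = P(M(d') = m | X)` and `p = P(D = d' | X)`.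
Consistency and the two conditional independences give `P(Y(d, M(d')) ≤ a) = ∑ m, E[r m * q m]`
and, on each stratum `{M = m, D = d'}`, `E[F_a(d, M, X); M = m, D = d' | X] = r m * q m * p`.
Summing over the countably many strata (with the Lebesgue conditional expectation, which commutes
with countable sums) gives `g(d', X) * p = (∑ m, r m * q m) * p`. Common support makes `p > 0`,
so `g(d', X) = ∑ m, r m * q m`, and integrating proves the identity.
-/

open MeasureTheory ProbabilityTheory

namespace MeasureTheory

variable {Ω : Type*} {m m₁ m₂ mΩ : MeasurableSpace Ω} {μ : Measure Ω}

lemma measure_eq_zero_of_setIntegral_nonpos {f : Ω → ℝ} {s : Set Ω}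
    (hpos : ∀ᵐ ω ∂μ, 0 < f ω) (hf : IntegrableOn f s μ) (hs : ∫ ω in s, f ω ∂μ ≤ 0) :
    μ s = 0 := by
  have hnn : 0 ≤ᵐ[μ.restrict s] f := ae_restrict_of_ae (hpos.mono fun _ hω => hω.le)
  have hzero : f =ᵐ[μ.restrict s] 0 :=
    (integral_eq_zero_iff_of_nonneg_ae hnn hf).mp (le_antisymm hs (integral_nonneg_of_ae hnn))
  have hfalse : ∀ᵐ _ ∂μ.restrict s, False := by
    filter_upwards [hzero, ae_restrict_of_ae hpos] with ω h₀ hω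
    exact (h₀ ▸ hω).false
  exact Measure.restrict_eq_zero.mp (ae_eq_bot.mp (Filter.eventually_false_iff_eq_bot.mp hfalse))

lemma ae_pos_condExp [IsFiniteMeasure μ] (hm : m ≤ mΩ) {f : Ω → ℝ} (hf : Integrable f μ)
    (hpos : ∀ᵐ ω ∂μ, 0 < f ω) : ∀ᵐ ω ∂μ, 0 < μ[f|m] ω := by
  have hS : MeasurableSet[m] {ω | μ[f|m] ω ≤ 0} :=
    measurableSet_le stronglyMeasurable_condExp.measurable measurable_const
  have hnull : μ {ω | μ[f|m] ω ≤ 0} = 0 :=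
    measure_eq_zero_of_setIntegral_nonpos hpos hf.integrableOn <| by
      rw [← setIntegral_condExp hm hf hS]
      exact setIntegral_nonpos (hm _ hS) fun _ hω => hω
  filter_upwards [measure_eq_zero_iff_ae_notMem.mp hnull] with ω hω using not_le.mp hω

lemma ae_abs_condExp_indicator_le_one (s : Set Ω) : ∀ᵐ ω ∂μ, |(μ⟦s | m⟧) ω| ≤ 1 :=
  ae_bdd_abs_condExp_of_ae_bdd_abs (R := (1 : ℝ))
    (ae_of_all _ fun ω => by by_cases hω : ω ∈ s <;> simp [hω])

lemma ae_condExp_indicator_mem_Icc (s : Set Ω) : ∀ᵐ ω ∂μ, (μ⟦s | m⟧) ω ∈ Set.Icc 0 1 := by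
  filter_upwards [condExp_nonneg (m := m) (ae_of_all μ fun _ =>
      Set.indicator_nonneg (fun _ _ => (zero_le_one : (0 : ℝ) ≤ 1)) _),
    ae_abs_condExp_indicator_le_one (μ := μ) (m := m) s] with ω h₀ h₁
  exact ⟨h₀, (abs_le.mp h₁).2⟩

lemma setIntegral_condExp_indicator_one [IsFiniteMeasure μ] (hm : m ≤ mΩ) {s t : Set Ω}
    (hs : MeasurableSet s) (ht : MeasurableSet[m] t) :
    ∫ ω in t, (μ⟦s | m⟧) ω ∂μ = μ.real (t ∩ s) := by
  rw [setIntegral_condExp hm ((integrable_const 1).indicator hs) ht, setIntegral_indicator hs,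
    setIntegral_const, smul_eq_mul, mul_one]

lemma lintegral_ofReal_condExp_indicator [IsFiniteMeasure μ] (hm : m ≤ mΩ) {s : Set Ω}
    (hs : MeasurableSet s) : ∫⁻ ω, ENNReal.ofReal ((μ⟦s | m⟧) ω) ∂μ = μ s := by
  rw [← ofReal_integral_eq_lintegral_ofReal integrable_condExp
    ((ae_condExp_indicator_mem_Icc s).mono fun _ hω => hω.1), integral_condExp hm,
    integral_indicator hs, setIntegral_const, smul_eq_mul, mul_one, ofReal_measureReal]

lemma measure_eq_zero_of_measure_inter_eq_zero [IsFiniteMeasure μ] (hm : m ≤ mΩ) {s t : Set Ω}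
    (hs : MeasurableSet s) (hpos : ∀ᵐ ω ∂μ, 0 < (μ⟦s | m⟧) ω) (ht : MeasurableSet[m] t)
    (hts : μ (t ∩ s) = 0) : μ t = 0 :=
  measure_eq_zero_of_setIntegral_nonpos hpos integrable_condExp.integrableOn <| by
    rw [setIntegral_condExp_indicator_one hm hs ht, Measure.real, hts, ENNReal.toReal_zero]

lemma ae_condExp_indicator_eq_zero_imp [IsFiniteMeasure μ] (hm : m ≤ mΩ) {s t : Set Ω}
    (hs : MeasurableSet s) (ht : MeasurableSet t)
    (hst : ∀ u, MeasurableSet[m] u → μ (u ∩ s) = 0 → μ (u ∩ t) = 0) :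
    ∀ᵐ ω ∂μ, (μ⟦s | m⟧) ω = 0 → (μ⟦t | m⟧) ω = 0 := by
  set u := {ω | (μ⟦s | m⟧) ω = 0}
  have hu : MeasurableSet[m] u :=
    measurableSet_eq_fun stronglyMeasurable_condExp.measurable measurable_const
  have hus : μ (u ∩ s) = 0 := by
    have hint := setIntegral_condExp_indicator_one (μ := μ) hm hs hu
    rwa [setIntegral_congr_fun (hm _ hu) (fun ω hω => hω), integral_zero, eq_comm,
      measureReal_eq_zero_iff] at hint
  have hut : ∫ ω in u, (μ⟦t | m⟧) ω ∂μ = 0 := by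
    rw [setIntegral_condExp_indicator_one hm ht hu, Measure.real, hst u hu hus,
      ENNReal.toReal_zero]
  have hnn : 0 ≤ᵐ[μ.restrict u] μ⟦t | m⟧ :=
    ae_restrict_of_ae ((ae_condExp_indicator_mem_Icc t).mono fun _ hω => hω.1)
  exact (ae_restrict_iff' (hm _ hu)).mp
    ((integral_eq_zero_iff_of_nonneg_ae hnn integrable_condExp.integrableOn).mp hut)

lemma condExp_indicator_condExp_of_le [IsFiniteMeasure μ] (h12 : m₁ ≤ m₂) (hm₂ : m₂ ≤ mΩ)
    {s : Set Ω} (hs : MeasurableSet[m₂] s) {f : Ω → ℝ} (hf : Integrable f μ) :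
    μ[s.indicator (μ[f|m₂])|m₁] =ᵐ[μ] μ[s.indicator f|m₁] :=
  (condExp_congr_ae (condExp_indicator hf hs).symm).trans (condExp_condExp_of_le h12 hm₂)

lemma condExp_indicator_ae_eq_mul [IsFiniteMeasure μ] {s : Set Ω} (hs : MeasurableSet s)
    {h : Ω → ℝ} (hh : StronglyMeasurable[m] h) (hint : Integrable (s.indicator h) μ) :
    μ[s.indicator h|m] =ᵐ[μ] h * μ⟦s | m⟧ := by
  have hmul : s.indicator h = h * s.indicator fun _ => (1 : ℝ) := by
    ext ω
    simpa using Set.indicator_mul_right s h (fun _ => (1 : ℝ)) (i := ω)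
  rw [hmul] at hint ⊢
  exact condExp_mul_of_stronglyMeasurable_left hh hint ((integrable_const 1).indicator hs)

lemma condExp_indicator_ae_eq_mul_of_condExp_eq_on [IsFiniteMeasure μ] (h12 : m₁ ≤ m₂)
    (hm₂ : m₂ ≤ mΩ) {s : Set Ω} (hs : MeasurableSet[m₂] s) {f h : Ω → ℝ} (hf : Integrable f μ)
    (hh : StronglyMeasurable[m₁] h) (hfh : ∀ᵐ ω ∂μ, ω ∈ s → μ[f|m₂] ω = h ω) :
    μ[s.indicator f|m₁] =ᵐ[μ] h * μ⟦s | m₁⟧ := by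
  have hind : s.indicator (μ[f|m₂]) =ᵐ[μ] s.indicator h := by
    filter_upwards [hfh] with ω hω
    by_cases hωs : ω ∈ s <;> simp [hωs, hω]
  refine (condExp_indicator_condExp_of_le h12 hm₂ hs hf).symm.trans
    ((condExp_congr_ae hind).trans ?_)
  exact condExp_indicator_ae_eq_mul (hm₂ _ hs) hh
    ((integrable_condExp.indicator (hm₂ _ hs)).congr hind)

/-- The contraction property of conditional independence. -/
lemma condExp_inter_inter_ae_eq_mul [IsFiniteMeasure μ] (h12 : m₁ ≤ m₂) (hm₂ : m₂ ≤ mΩ)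
    {A B E : Set Ω} (hA : MeasurableSet A) (hB : MeasurableSet B) (hE : MeasurableSet[m₂] E)
    (hA₁ : μ⟦A | m₂⟧ =ᵐ[μ] μ⟦A | m₁⟧) (hAB : μ⟦A ∩ B | m₂⟧ =ᵐ[μ] μ⟦A | m₂⟧ * μ⟦B | m₂⟧) :
    μ⟦A ∩ B ∩ E | m₁⟧ =ᵐ[μ] μ⟦A | m₁⟧ * μ⟦B ∩ E | m₁⟧ := by
  have hone : ∀ s t : Set Ω,
      (s ∩ t).indicator (fun _ => (1 : ℝ)) = t.indicator (s.indicator fun _ => 1) :=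
    fun s t => by rw [Set.indicator_indicator, Set.inter_comm]
  have hprod : E.indicator (μ⟦A ∩ B | m₂⟧) =ᵐ[μ] μ⟦A | m₁⟧ * E.indicator (μ⟦B | m₂⟧) := by
    filter_upwards [hAB, hA₁] with ω hω hω₁
    by_cases hωE : ω ∈ E <;> simp [hωE, hω, hω₁]
  calc μ⟦A ∩ B ∩ E | m₁⟧
      =ᵐ[μ] μ[E.indicator (μ⟦A ∩ B | m₂⟧)|m₁] := by
        rw [hone]
        exact (condExp_indicator_condExp_of_le h12 hm₂ hE
          ((integrable_const 1).indicator (hA.inter hB))).symm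
    _ =ᵐ[μ] μ[μ⟦A | m₁⟧ * E.indicator (μ⟦B | m₂⟧)|m₁] := condExp_congr_ae hprod
    _ =ᵐ[μ] μ⟦A | m₁⟧ * μ[E.indicator (μ⟦B | m₂⟧)|m₁] :=
        condExp_stronglyMeasurable_mul_of_bound (h12.trans hm₂) stronglyMeasurable_condExp
          (integrable_condExp.indicator (hm₂ _ hE)) 1 (ae_abs_condExp_indicator_le_one A)
    _ =ᵐ[μ] μ⟦A | m₁⟧ * μ⟦B ∩ E | m₁⟧ := by
        rw [hone B E]
        exact (ae_eq_refl _).mul (condExp_indicator_condExp_of_le h12 hm₂ hE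
          ((integrable_const 1).indicator hB))

lemma ae_ofReal_condExp_eq_tsum {ι : Type*} [Countable ι] {f : Ω → ℝ} {g : ι → Ω → ℝ}
    (hf : Integrable f μ) (hf₀ : 0 ≤ᵐ[μ] f) (hg : ∀ i, Integrable (g i) μ)
    (hg₀ : ∀ i, 0 ≤ᵐ[μ] g i) (hsum : ∀ ω, ENNReal.ofReal (f ω) = ∑' i, ENNReal.ofReal (g i ω)) :
    ∀ᵐ ω ∂μ, ENNReal.ofReal (μ[f|m] ω) = ∑' i, ENNReal.ofReal (μ[g i|m] ω) := by
  have hsum' : (fun ω => ENNReal.ofReal (f ω)) = ∑' i, fun ω => ENNReal.ofReal (g i ω) := by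
    ext ω
    rw [hsum, ENNReal.tsum_apply]
  filter_upwards [condLExp_ofReal m hf hf₀,
    condLExp_tsum m (P := μ) fun i => (hg i).aemeasurable.ennreal_ofReal,
    ae_all_iff.mpr fun i => condLExp_ofReal m (hg i) (hg₀ i)] with ω hf' htsum hg'
  rw [← hf', hsum', htsum, ENNReal.tsum_apply]
  exact tsum_congr hg'

lemma ofReal_eq_tsum_ofReal_indicator_preimage_singleton {𝓜 : Type*} (N : Ω → 𝓜)
    (f : Ω → ℝ) (ω : Ω) :
    ENNReal.ofReal (f ω) = ∑' i, ENNReal.ofReal ((N ⁻¹' {i}).indicator f ω) := by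
  rw [tsum_eq_single (N ω) fun i hi => by
    rw [Set.indicator_of_notMem (fun hω => hi hω.symm), ENNReal.ofReal_zero]]
  simp

lemma measure_setOf_mem_eq_tsum {𝓜 : Type*} [MeasurableSpace 𝓜] [Countable 𝓜]
    [MeasurableSingletonClass 𝓜] {N : Ω → 𝓜} (hN : Measurable N) {E : 𝓜 → Set Ω}
    (hE : ∀ i, MeasurableSet (E i)) :
    μ {ω | ω ∈ E (N ω)} = ∑' i, μ (E i ∩ N ⁻¹' {i}) := by
  rw [← measure_iUnion (fun i j hij => Set.disjoint_left.mpr fun ω hi hj =>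
      hij (hi.2.symm.trans hj.2)) fun i => (hE i).inter (hN (measurableSet_singleton i))]
  congr 1
  ext ω
  simp

section Comap

variable {δ 𝓧 : Type*} [MeasurableSpace δ] [Countable δ] [MeasurableSingletonClass δ]
  [MeasurableSpace 𝓧] {D : Ω → δ} {X : Ω → 𝓧}

local notation "𝔛" => MeasurableSpace.comap X inferInstance
local notation "𝔇𝔛" => MeasurableSpace.comap (fun ω => (D ω, X ω)) inferInstance

lemma setIntegral_eq_of_forall_preimage_singleton_inter (hD : Measurable D) (hX : Measurable X)
    {f₁ f₂ : Ω → ℝ} (hf₁ : Integrable f₁ μ) (hf₂ : Integrable f₂ μ)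
    (hf : ∀ i S, MeasurableSet S →
      ∫ ω in D ⁻¹' {i} ∩ X ⁻¹' S, f₁ ω ∂μ = ∫ ω in D ⁻¹' {i} ∩ X ⁻¹' S, f₂ ω ∂μ)
    {t : Set Ω} (ht : MeasurableSet[𝔇𝔛] t) :
    ∫ ω in t, f₁ ω ∂μ = ∫ ω in t, f₂ ω ∂μ := by
  obtain ⟨T, hT, rfl⟩ := ht
  have hslice : ∀ i, MeasurableSet {x | (i, x) ∈ T} := fun i => measurable_prodMk_left hT
  have hunion : (fun ω => (D ω, X ω)) ⁻¹' T = ⋃ i, D ⁻¹' {i} ∩ X ⁻¹' {x | (i, x) ∈ T} := by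
    ext ω
    simp
  have hmeas : ∀ i, MeasurableSet (D ⁻¹' {i} ∩ X ⁻¹' {x | (i, x) ∈ T}) :=
    fun i => (hD (measurableSet_singleton i)).inter (hX (hslice i))
  have hdisj : Pairwise (Function.onFun Disjoint fun i => D ⁻¹' {i} ∩ X ⁻¹' {x | (i, x) ∈ T}) :=
    fun i j hij => Set.disjoint_left.mpr fun ω hi hj => hij (hi.1.symm.trans hj.1)
  rw [hunion, integral_iUnion hmeas hdisj hf₁.integrableOn,
    integral_iUnion hmeas hdisj hf₂.integrableOn]
  exact tsum_congr fun i => hf i _ (hslice i)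

lemma condExp_comap_prodMk_ae_eq_of_inter_eq_mul [IsFiniteMeasure μ] (hD : Measurable D)
    (hX : Measurable X) {A : Set Ω} (hA : MeasurableSet A)
    (hind : ∀ i, μ⟦A ∩ D ⁻¹' {i} | 𝔛⟧ =ᵐ[μ] μ⟦A | 𝔛⟧ * μ⟦D ⁻¹' {i} | 𝔛⟧) :
    μ⟦A | 𝔇𝔛⟧ =ᵐ[μ] μ⟦A | 𝔛⟧ := by
  have hA1 : Integrable (A.indicator fun _ => (1 : ℝ)) μ := (integrable_const 1).indicator hA
  refine (ae_eq_condExp_of_forall_setIntegral_eq (hD.prodMk hX).comap_le hA1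
    (fun _ _ _ => integrable_condExp.integrableOn) (fun t ht _ => ?_)
    (stronglyMeasurable_condExp.mono (Measurable.comap_le (f := X)
      (measurable_snd.comp (comap_measurable fun ω => (D ω, X ω))))).aestronglyMeasurable).symm
  refine setIntegral_eq_of_forall_preimage_singleton_inter hD hX integrable_condExp hA1
    (fun i S hS => ?_) ht
  have hDi : MeasurableSet (D ⁻¹' {i}) := hD (measurableSet_singleton i)
  have hXS : MeasurableSet[𝔛] (X ⁻¹' S) := ⟨S, hS, rfl⟩
  calc ∫ ω in D ⁻¹' {i} ∩ X ⁻¹' S, (μ⟦A | 𝔛⟧) ω ∂μ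
      = ∫ ω in X ⁻¹' S, μ[(D ⁻¹' {i}).indicator (μ⟦A | 𝔛⟧)|𝔛] ω ∂μ := by
        rw [setIntegral_condExp hX.comap_le (integrable_condExp.indicator hDi) hXS,
          setIntegral_indicator hDi, Set.inter_comm]
    _ = ∫ ω in X ⁻¹' S, (μ⟦A ∩ D ⁻¹' {i} | 𝔛⟧) ω ∂μ := by
        refine setIntegral_congr_ae (hX.comap_le _ hXS) ?_
        filter_upwards [condExp_indicator_ae_eq_mul hDi stronglyMeasurable_condExp
          (integrable_condExp.indicator hDi), hind i] with ω hω hω' _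
        rw [hω, hω']
    _ = ∫ ω in D ⁻¹' {i} ∩ X ⁻¹' S, A.indicator (fun _ => (1 : ℝ)) ω ∂μ := by
        rw [setIntegral_condExp_indicator_one hX.comap_le (hA.inter hDi) hXS,
          setIntegral_indicator hA, setIntegral_const, smul_eq_mul, mul_one, Set.inter_comm,
          Set.inter_comm A, Set.inter_right_comm]

lemma condExp_preimage_comap_prodMk_ae_eq [StandardBorelSpace Ω] [IsFiniteMeasure μ]
    {β : Type*} [MeasurableSpace β] {Z : Ω → β} (hZ : Measurable Z) (hD : Measurable D)
    (hX : Measurable X) (hind : CondIndepFun 𝔛 hX.comap_le Z D μ) {S : Set β}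
    (hS : MeasurableSet S) :
    μ⟦Z ⁻¹' S | 𝔇𝔛⟧ =ᵐ[μ] μ⟦Z ⁻¹' S | 𝔛⟧ :=
  condExp_comap_prodMk_ae_eq_of_inter_eq_mul hD hX (hZ hS) fun i =>
    (condIndepFun_iff_condExp_inter_preimage_eq_mul hZ hD).mp hind S {i} hS
      (measurableSet_singleton i)

end Comap

end MeasureTheory

/-- Assumptions 1.1–1.4, with `Ypot d m = Y(d,m)` and `Mpot d = M(d)`. Treatments are encoded
in `ℕ`; the assumptions only constrain `d ≤ 1`. -/
structure IsMediationModel {Ω 𝓜 𝓧 : Type*} [MeasurableSpace Ω] [StandardBorelSpace Ω]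
    [MeasurableSpace 𝓜] [MeasurableSpace 𝓧] (P : Measure Ω) [IsProbabilityMeasure P]
    (Y : Ω → ℝ) (D : Ω → ℕ) (M : Ω → 𝓜) (X : Ω → 𝓧)
    (Ypot : ℕ → 𝓜 → Ω → ℝ) (Mpot : ℕ → Ω → 𝓜) : Prop where
  measurable_Y : Measurable Y
  measurable_D : Measurable D
  measurable_M : Measurable M
  measurable_X : Measurable X
  measurable_Ypot : ∀ d m, Measurable (Ypot d m)
  measurable_Mpot : ∀ d, Measurable (Mpot d)
  mediator_consistent : ∀ d ω, D ω = d → Mpot d ω = M ω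
  outcome_consistent : ∀ d m ω, D ω = d → M ω = m → Ypot d m ω = Y ω
  condIndep_treatment : ∀ d ≤ 1, ∀ d' ≤ 1, ∀ m : 𝓜,
    CondIndepFun (MeasurableSpace.comap X inferInstance) measurable_X.comap_le
      (fun ω => (Ypot d m ω, Mpot d' ω)) D P
  condIndep_mediator : ∀ d ≤ 1, ∀ d' ≤ 1, ∀ m : 𝓜,
    CondIndepFun (MeasurableSpace.comap (fun ω => (D ω, X ω)) inferInstance)
      (measurable_D.prodMk measurable_X).comap_le (Ypot d m) (Mpot d') P
  common_support : ∀ d ≤ 1, ∀ᵐ ω ∂P,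
    0 < (P[(fun ω' => if D ω' = d then (1 : ℝ) else 0) |
      MeasurableSpace.comap (fun ω' => (M ω', X ω')) inferInstance]) ω

structure IsOutcomeCDF {Ω 𝓜 𝓧 : Type*} [MeasurableSpace Ω] [MeasurableSpace 𝓜]
    [MeasurableSpace 𝓧] (P : Measure Ω) (Y : Ω → ℝ) (D : Ω → ℕ) (M : Ω → 𝓜) (X : Ω → 𝓧)
    (a : ℝ) (F : ℕ → 𝓜 → 𝓧 → ℝ) : Prop where
  measurable : Measurable fun t : ℕ × 𝓜 × 𝓧 => F t.1 t.2.1 t.2.2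
  ae_eq_condExp : (fun ω => F (D ω) (M ω) (X ω)) =ᵐ[P]
    P[(fun ω' => if Y ω' ≤ a then (1 : ℝ) else 0) |
      MeasurableSpace.comap (fun ω' => (D ω', M ω', X ω')) inferInstance]

structure IsRegression {Ω 𝓧 : Type*} [MeasurableSpace Ω] [MeasurableSpace 𝓧]
    (P : Measure Ω) (D : Ω → ℕ) (X : Ω → 𝓧) (f : Ω → ℝ) (g : ℕ → 𝓧 → ℝ) : Prop where
  measurable : Measurable fun t : ℕ × 𝓧 => g t.1 t.2
  ae_eq_condExp : (fun ω => g (D ω) (X ω)) =ᵐ[P]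
    P[f | MeasurableSpace.comap (fun ω' => (D ω', X ω')) inferInstance]

namespace IsMediationModel

variable {Ω 𝓜 𝓧 : Type*} [MeasurableSpace Ω] [StandardBorelSpace Ω]
  [MeasurableSpace 𝓜] [MeasurableSpace 𝓧]
  {P : Measure Ω} [IsProbabilityMeasure P] {Y : Ω → ℝ} {D : Ω → ℕ} {M : Ω → 𝓜} {X : Ω → 𝓧}
  {Ypot : ℕ → 𝓜 → Ω → ℝ} {Mpot : ℕ → Ω → 𝓜} {d d' : ℕ} {a : ℝ} {F : ℕ → 𝓜 → 𝓧 → ℝ}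

local notation "𝔛" => MeasurableSpace.comap X inferInstance
local notation "𝔇𝔛" => MeasurableSpace.comap (fun ω => (D ω, X ω)) inferInstance
local notation "𝔐𝔛" => MeasurableSpace.comap (fun ω => (M ω, X ω)) inferInstance
local notation "𝔇𝔐𝔛" => MeasurableSpace.comap (fun ω => (D ω, M ω, X ω)) inferInstance

lemma common_support_indicator (h : IsMediationModel P Y D M X Ypot Mpot) (hd : d ≤ 1) :
    ∀ᵐ ω ∂P, 0 < (P⟦D ⁻¹' {d} | 𝔐𝔛⟧) ω := by
  have hite : (fun ω => if D ω = d then (1 : ℝ) else 0) = (D ⁻¹' {d}).indicator fun _ => 1 := by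
    funext ω
    by_cases hω : D ω = d <;> simp [hω]
  simpa only [hite] using h.common_support d hd

lemma ae_pos_condExp_treatment (h : IsMediationModel P Y D M X Ypot Mpot) (hd : d ≤ 1) :
    ∀ᵐ ω ∂P, 0 < (P⟦D ⁻¹' {d} | 𝔛⟧) ω := by
  filter_upwards [ae_pos_condExp h.measurable_X.comap_le integrable_condExp
      (h.common_support_indicator hd),
    condExp_condExp_of_le (f := (D ⁻¹' {d}).indicator fun _ => (1 : ℝ)) (μ := P)
      (Measurable.comap_le (f := X) (measurable_snd.comp (comap_measurable fun ω => (M ω, X ω))))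
      (h.measurable_M.prodMk h.measurable_X).comap_le] with ω hpos htower
  rwa [← htower]

lemma preimage_mediator_inter (h : IsMediationModel P Y D M X Ypot Mpot) (d : ℕ) (m : 𝓜) :
    Mpot d ⁻¹' {m} ∩ D ⁻¹' {d} = M ⁻¹' {m} ∩ D ⁻¹' {d} := by
  ext ω
  simp only [Set.mem_inter_iff, Set.mem_preimage, Set.mem_singleton_iff]
  exact ⟨fun hω => ⟨h.mediator_consistent d ω hω.2 ▸ hω.1, hω.2⟩,
    fun hω => ⟨(h.mediator_consistent d ω hω.2).trans hω.1, hω.2⟩⟩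

lemma condExp_potential_inter_ae_eq_mul [MeasurableSingletonClass 𝓜]
    (h : IsMediationModel P Y D M X Ypot Mpot) (hd : d ≤ 1) {e : ℕ} (he : e ≤ 1) (m : 𝓜)
    {E : Set Ω} (hE : MeasurableSet[𝔇𝔛] E) :
    P⟦Ypot d m ⁻¹' Set.Iic a ∩ Mpot e ⁻¹' {m} ∩ E | 𝔛⟧ =ᵐ[P]
      P⟦Ypot d m ⁻¹' Set.Iic a | 𝔛⟧ * P⟦Mpot e ⁻¹' {m} ∩ E | 𝔛⟧ :=
  condExp_inter_inter_ae_eq_mul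
    (Measurable.comap_le (f := X) (measurable_snd.comp (comap_measurable fun ω => (D ω, X ω))))
    (h.measurable_D.prodMk h.measurable_X).comap_le (h.measurable_Ypot d m measurableSet_Iic)
    (h.measurable_Mpot e (measurableSet_singleton m)) hE
    (condExp_preimage_comap_prodMk_ae_eq (h.measurable_Ypot d m) h.measurable_D h.measurable_X
      ((h.condIndep_treatment d hd e he m).comp measurable_fst measurable_id) measurableSet_Iic)
    ((condIndepFun_iff_condExp_inter_preimage_eq_mul (h.measurable_Ypot d m)
      (h.measurable_Mpot e)).mp (h.condIndep_mediator d hd e he m) _ _ measurableSet_Iic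
      (measurableSet_singleton m))

lemma measure_potential_le_eq_tsum [Countable 𝓜] [MeasurableSingletonClass 𝓜]
    (h : IsMediationModel P Y D M X Ypot Mpot) (hd : d ≤ 1) (hd' : d' ≤ 1) (a : ℝ) :
    P {ω | Ypot d (Mpot d' ω) ω ≤ a} = ∑' m, ∫⁻ ω,
      ENNReal.ofReal ((P⟦Ypot d m ⁻¹' Set.Iic a | 𝔛⟧) ω * (P⟦Mpot d' ⁻¹' {m} | 𝔛⟧) ω) ∂P := by
  rw [show {ω | Ypot d (Mpot d' ω) ω ≤ a} = {ω | ω ∈ Ypot d (Mpot d' ω) ⁻¹' Set.Iic a} from rfl,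
    measure_setOf_mem_eq_tsum (h.measurable_Mpot d') fun m =>
      h.measurable_Ypot d m measurableSet_Iic]
  refine tsum_congr fun m => ?_
  rw [← lintegral_ofReal_condExp_indicator h.measurable_X.comap_le
    ((h.measurable_Ypot d m measurableSet_Iic).inter
      (h.measurable_Mpot d' (measurableSet_singleton m)))]
  refine lintegral_congr_ae ?_
  filter_upwards [h.condExp_potential_inter_ae_eq_mul (a := a) hd hd' m MeasurableSet.univ]
    with ω hω
  simp only [Set.inter_univ, Pi.mul_apply] at hω
  rw [hω]

/-- `F d` is only determined on `{D = d}`; common support carries its bounds to all of `Ω`. -/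
lemma ae_outcomeCDF_mem_Icc (h : IsMediationModel P Y D M X Ypot Mpot) (hd : d ≤ 1)
    (hF : IsOutcomeCDF P Y D M X a F) : ∀ᵐ ω ∂P, F d (M ω) (X ω) ∈ Set.Icc 0 1 := by
  have hite : (fun ω => if Y ω ≤ a then (1 : ℝ) else 0) =
      (Y ⁻¹' Set.Iic a).indicator fun _ => 1 := by
    funext ω
    by_cases hω : Y ω ≤ a <;> simp [hω]
  have hFd : Measurable fun t : 𝓜 × 𝓧 => F d t.1 t.2 :=
    hF.measurable.comp (measurable_const.prodMk measurable_id)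
  have hbad : MeasurableSet[𝔐𝔛] ((fun ω => (M ω, X ω)) ⁻¹' {t | F d t.1 t.2 ∉ Set.Icc 0 1}) :=
    ⟨_, (hFd measurableSet_Icc).compl, rfl⟩
  refine (measure_eq_zero_iff_ae_notMem.mp ?_).mono fun ω hω => not_not.mp hω
  refine measure_eq_zero_of_measure_inter_eq_zero (h.measurable_M.prodMk h.measurable_X).comap_le
    (h.measurable_D (measurableSet_singleton d)) (h.common_support_indicator hd) hbad
    (measure_eq_zero_iff_ae_notMem.mpr ?_)
  filter_upwards [hite ▸ hF.ae_eq_condExp,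
    ae_condExp_indicator_mem_Icc (μ := P) (m := 𝔇𝔐𝔛) (Y ⁻¹' Set.Iic a)]
    with ω hω h01 ⟨hbadω, hDω⟩
  have hFω : F d (M ω) (X ω) = _ := (congrArg (F · (M ω) (X ω)) hDω).symm.trans hω
  exact hbadω (hFω ▸ h01)

lemma integrable_outcomeCDF (h : IsMediationModel P Y D M X Ypot Mpot) (hd : d ≤ 1)
    (hF : IsOutcomeCDF P Y D M X a F) : Integrable (fun ω => F d (M ω) (X ω)) P := by
  refine .of_bound ((hF.measurable.comp (measurable_const.prodMk
    (h.measurable_M.prodMk h.measurable_X))).aestronglyMeasurable) 1 ?_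
  filter_upwards [h.ae_outcomeCDF_mem_Icc hd hF] with ω hω
  exact abs_le.mpr ⟨by linarith [hω.1], hω.2⟩

lemma outcomeCDF_mul_condExp_stratum_ae_eq [MeasurableSingletonClass 𝓜]
    (h : IsMediationModel P Y D M X Ypot Mpot) (hd : d ≤ 1) (hF : IsOutcomeCDF P Y D M X a F)
    (m : 𝓜) :
    (fun ω => F d m (X ω)) * P⟦M ⁻¹' {m} ∩ D ⁻¹' {d} | 𝔛⟧ =ᵐ[P]
      P⟦Ypot d m ⁻¹' Set.Iic a | 𝔛⟧ * P⟦M ⁻¹' {m} ∩ D ⁻¹' {d} | 𝔛⟧ := by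
  have hs : MeasurableSet[𝔇𝔐𝔛] (M ⁻¹' {m} ∩ D ⁻¹' {d}) :=
    ⟨{t | t.2.1 = m} ∩ {t | t.1 = d}, (measurable_fst.comp measurable_snd
      (measurableSet_singleton m)).inter (measurable_fst (measurableSet_singleton d)), rfl⟩
  have hFm : StronglyMeasurable[𝔛] fun ω => F d m (X ω) :=
    ((hF.measurable.comp (measurable_const.prodMk (measurable_const.prodMk measurable_id))).comp
      (comap_measurable X)).stronglyMeasurable
  have hY : Integrable (fun ω => if Y ω ≤ a then (1 : ℝ) else 0) P :=
    (integrable_const 1).indicator (h.measurable_Y (measurableSet_Iic (a := a))) |>.congr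
      (ae_of_all _ fun ω => by by_cases hω : Y ω ≤ a <;> simp [hω])
  have houtcome : (M ⁻¹' {m} ∩ D ⁻¹' {d}).indicator (fun ω => if Y ω ≤ a then (1 : ℝ) else 0) =
      (Ypot d m ⁻¹' Set.Iic a ∩ Mpot d ⁻¹' {m} ∩ D ⁻¹' {d}).indicator fun _ => 1 := by
    rw [Set.inter_assoc, h.preimage_mediator_inter d m]
    ext ω
    by_cases hω : ω ∈ M ⁻¹' {m} ∩ D ⁻¹' {d}
    · have hYω := h.outcome_consistent d m ω hω.2 hω.1
      by_cases hYa : Y ω ≤ a <;> simp [hω, hYω, hYa]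
    · simp [hω]
  calc (fun ω => F d m (X ω)) * P⟦M ⁻¹' {m} ∩ D ⁻¹' {d} | 𝔛⟧
      =ᵐ[P] P[(M ⁻¹' {m} ∩ D ⁻¹' {d}).indicator
          fun ω => if Y ω ≤ a then (1 : ℝ) else 0 | 𝔛] := by
        refine (condExp_indicator_ae_eq_mul_of_condExp_eq_on
          (Measurable.comap_le (f := X) ((measurable_snd.comp measurable_snd).comp
            (comap_measurable fun ω => (D ω, M ω, X ω))))
          (h.measurable_D.prodMk (h.measurable_M.prodMk h.measurable_X)).comap_le hs hY hFm
          ?_).symm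
        filter_upwards [hF.ae_eq_condExp] with ω hω ⟨hM, hD⟩
        rw [← hω, show M ω = m from hM, show D ω = d from hD]
    _ =ᵐ[P] P⟦Ypot d m ⁻¹' Set.Iic a | 𝔛⟧ * P⟦M ⁻¹' {m} ∩ D ⁻¹' {d} | 𝔛⟧ := by
        rw [houtcome, ← h.preimage_mediator_inter d m]
        exact h.condExp_potential_inter_ae_eq_mul hd hd m (E := D ⁻¹' {d})
          ⟨Prod.fst ⁻¹' {d}, measurable_fst (measurableSet_singleton d), rfl⟩

lemma condExp_stratum_ae_eq_mul [MeasurableSingletonClass 𝓜]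
    (h : IsMediationModel P Y D M X Ypot Mpot) (hd' : d' ≤ 1) (m : 𝓜) :
    P⟦M ⁻¹' {m} ∩ D ⁻¹' {d'} | 𝔛⟧ =ᵐ[P] P⟦Mpot d' ⁻¹' {m} | 𝔛⟧ * P⟦D ⁻¹' {d'} | 𝔛⟧ := by
  rw [← h.preimage_mediator_inter d' m]
  exact (condIndepFun_iff_condExp_inter_preimage_eq_mul (h.measurable_Mpot d')
    h.measurable_D).mp
    ((h.condIndep_treatment 0 zero_le_one d' hd' m).comp measurable_snd measurable_id)
    _ _ (measurableSet_singleton m) (measurableSet_singleton d')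

lemma ae_condExp_stratum_eq_zero_imp [MeasurableSingletonClass 𝓜]
    (h : IsMediationModel P Y D M X Ypot Mpot) (hd : d ≤ 1) (d' : ℕ) (m : 𝓜) :
    ∀ᵐ ω ∂P, (P⟦M ⁻¹' {m} ∩ D ⁻¹' {d} | 𝔛⟧) ω = 0 → (P⟦M ⁻¹' {m} ∩ D ⁻¹' {d'} | 𝔛⟧) ω = 0 := by
  have hMm : MeasurableSet (M ⁻¹' {m}) := h.measurable_M (measurableSet_singleton m)
  have hDd : ∀ δ, MeasurableSet (D ⁻¹' {δ}) := fun δ => h.measurable_D (measurableSet_singleton δ)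
  refine ae_condExp_indicator_eq_zero_imp h.measurable_X.comap_le (hMm.inter (hDd d))
    (hMm.inter (hDd d')) fun u hu hnull => measure_mono_null
      (Set.inter_subset_inter_right u Set.inter_subset_left) ?_
  obtain ⟨S, hS, rfl⟩ := hu
  exact measure_eq_zero_of_measure_inter_eq_zero
    (h.measurable_M.prodMk h.measurable_X).comap_le (hDd d) (h.common_support_indicator hd)
    ⟨{m} ×ˢ S, (measurableSet_singleton m).prod hS, by ext; simp [and_comm]⟩
    (by rwa [Set.inter_assoc])

/-- `F d m` is only known to agree with `P(Y(d,m) ≤ a | X)` where `P(M = m, D = d | X) > 0`;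
by common support the stratum `{M = m, D = d'}` is negligible elsewhere. -/
lemma condExp_stratum_ae_eq [MeasurableSingletonClass 𝓜]
    (h : IsMediationModel P Y D M X Ypot Mpot) (hd : d ≤ 1) (hd' : d' ≤ 1)
    (hF : IsOutcomeCDF P Y D M X a F) (m : 𝓜) :
    P[(M ⁻¹' {m}).indicator ((D ⁻¹' {d'}).indicator fun ω => F d (M ω) (X ω)) | 𝔛] =ᵐ[P]
      P⟦Ypot d m ⁻¹' Set.Iic a | 𝔛⟧ * P⟦Mpot d' ⁻¹' {m} | 𝔛⟧ * P⟦D ⁻¹' {d'} | 𝔛⟧ := by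
  have hMm : MeasurableSet (M ⁻¹' {m}) := h.measurable_M (measurableSet_singleton m)
  have hDd' : MeasurableSet (D ⁻¹' {d'}) := h.measurable_D (measurableSet_singleton d')
  have hstratum : (M ⁻¹' {m}).indicator ((D ⁻¹' {d'}).indicator fun ω => F d (M ω) (X ω)) =
      (M ⁻¹' {m} ∩ D ⁻¹' {d'}).indicator fun ω => F d m (X ω) := by
    rw [Set.indicator_indicator]
    exact Set.indicator_congr fun ω hω => by rw [show M ω = m from hω.1]
  have hint : Integrable ((M ⁻¹' {m} ∩ D ⁻¹' {d'}).indicator fun ω => F d m (X ω)) P := by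
    rw [← hstratum]
    exact ((h.integrable_outcomeCDF hd hF).indicator hDd').indicator hMm
  have hFm : StronglyMeasurable[𝔛] fun ω => F d m (X ω) :=
    ((hF.measurable.comp (measurable_const.prodMk (measurable_const.prodMk measurable_id))).comp
      (comap_measurable X)).stronglyMeasurable
  have hFσ : (fun ω => F d m (X ω)) * P⟦M ⁻¹' {m} ∩ D ⁻¹' {d'} | 𝔛⟧ =ᵐ[P]
      P⟦Ypot d m ⁻¹' Set.Iic a | 𝔛⟧ * P⟦M ⁻¹' {m} ∩ D ⁻¹' {d'} | 𝔛⟧ := by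
    filter_upwards [h.outcomeCDF_mul_condExp_stratum_ae_eq hd hF m,
      h.ae_condExp_stratum_eq_zero_imp hd d' m] with ω hτ hzero
    by_cases hτ₀ : (P⟦M ⁻¹' {m} ∩ D ⁻¹' {d} | 𝔛⟧) ω = 0
    · simp [hzero hτ₀]
    · simp only [Pi.mul_apply] at hτ ⊢
      rw [mul_right_cancel₀ hτ₀ hτ]
  calc P[(M ⁻¹' {m}).indicator ((D ⁻¹' {d'}).indicator fun ω => F d (M ω) (X ω)) | 𝔛]
      = P[(M ⁻¹' {m} ∩ D ⁻¹' {d'}).indicator fun ω => F d m (X ω) | 𝔛] := by rw [hstratum]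
    _ =ᵐ[P] (fun ω => F d m (X ω)) * P⟦M ⁻¹' {m} ∩ D ⁻¹' {d'} | 𝔛⟧ :=
        condExp_indicator_ae_eq_mul (hMm.inter hDd') hFm hint
    _ =ᵐ[P] P⟦Ypot d m ⁻¹' Set.Iic a | 𝔛⟧ * P⟦M ⁻¹' {m} ∩ D ⁻¹' {d'} | 𝔛⟧ := hFσ
    _ =ᵐ[P] P⟦Ypot d m ⁻¹' Set.Iic a | 𝔛⟧ * P⟦Mpot d' ⁻¹' {m} | 𝔛⟧ * P⟦D ⁻¹' {d'} | 𝔛⟧ := by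
        filter_upwards [h.condExp_stratum_ae_eq_mul hd' m] with ω hω
        simp only [Pi.mul_apply] at hω ⊢
        rw [hω, mul_assoc]

lemma condExp_treatment_indicator_ae_eq (h : IsMediationModel P Y D M X Ypot Mpot) (hd : d ≤ 1)
    (hF : IsOutcomeCDF P Y D M X a F) {g : ℕ → 𝓧 → ℝ}
    (hg : IsRegression P D X (fun ω => F d (M ω) (X ω)) g) (d' : ℕ) :
    P[(D ⁻¹' {d'}).indicator (fun ω => F d (M ω) (X ω)) | 𝔛] =ᵐ[P]
      (fun ω => g d' (X ω)) * P⟦D ⁻¹' {d'} | 𝔛⟧ := by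
  refine condExp_indicator_ae_eq_mul_of_condExp_eq_on
    (Measurable.comap_le (f := X) (measurable_snd.comp (comap_measurable fun ω => (D ω, X ω))))
    (h.measurable_D.prodMk h.measurable_X).comap_le
    ⟨Prod.fst ⁻¹' {d'}, measurable_fst (measurableSet_singleton d'), rfl⟩
    (h.integrable_outcomeCDF hd hF)
    ((hg.measurable.comp (measurable_const.prodMk measurable_id)).comp
      (comap_measurable X)).stronglyMeasurable ?_
  filter_upwards [hg.ae_eq_condExp] with ω hω hD
  rw [← hω, show D ω = d' from hD]

theorem ae_ofReal_regression_eq_tsum [Countable 𝓜] [MeasurableSingletonClass 𝓜]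
    (h : IsMediationModel P Y D M X Ypot Mpot) (hd : d ≤ 1) (hd' : d' ≤ 1)
    (hF : IsOutcomeCDF P Y D M X a F) {g : ℕ → 𝓧 → ℝ}
    (hg : IsRegression P D X (fun ω => F d (M ω) (X ω)) g) :
    ∀ᵐ ω ∂P, 0 ≤ g d' (X ω) ∧ ENNReal.ofReal (g d' (X ω)) =
      ∑' m, ENNReal.ofReal ((P⟦Ypot d m ⁻¹' Set.Iic a | 𝔛⟧) ω * (P⟦Mpot d' ⁻¹' {m} | 𝔛⟧) ω) := by
  set f := (D ⁻¹' {d'}).indicator fun ω => F d (M ω) (X ω)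
  have hf : Integrable f P :=
    (h.integrable_outcomeCDF hd hF).indicator (h.measurable_D (measurableSet_singleton d'))
  have hf₀ : 0 ≤ᵐ[P] f := (h.ae_outcomeCDF_mem_Icc hd hF).mono fun ω hω =>
    Set.indicator_nonneg (fun _ _ => hω.1) ω
  have hsum := ae_ofReal_condExp_eq_tsum (m := 𝔛) hf hf₀
    (fun m => hf.indicator (h.measurable_M (measurableSet_singleton m)))
    (fun m => hf₀.mono fun ω hω => Set.indicator_nonneg (fun _ _ => hω) ω)
    (ofReal_eq_tsum_ofReal_indicator_preimage_singleton M f)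
  filter_upwards [hsum, ae_all_iff.mpr fun m => h.condExp_stratum_ae_eq hd hd' hF m,
    h.condExp_treatment_indicator_ae_eq hd hF hg d', h.ae_pos_condExp_treatment hd',
    condExp_nonneg (m := 𝔛) hf₀] with ω hsum hstrata hgp hp hg₀
  simp only [Pi.mul_apply] at hstrata hgp
  rw [hgp] at hsum hg₀
  refine ⟨(mul_nonneg_iff_of_pos_right hp).mp hg₀, ?_⟩
  have hp₀ : ENNReal.ofReal ((P⟦D ⁻¹' {d'} | 𝔛⟧) ω) ≠ 0 := (ENNReal.ofReal_pos.mpr hp).ne'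
  rw [← ENNReal.mul_left_inj hp₀ ENNReal.ofReal_ne_top, ← ENNReal.ofReal_mul' hp.le, hsum,
    ← ENNReal.tsum_mul_right]
  exact tsum_congr fun m => by rw [hstrata m, ENNReal.ofReal_mul' hp.le]

end IsMediationModel

theorem statement_0_general
    {Ω 𝓜 𝓧 : Type*} [MeasurableSpace Ω] [StandardBorelSpace Ω]
    [MeasurableSpace 𝓜] [Countable 𝓜] [MeasurableSingletonClass 𝓜] [MeasurableSpace 𝓧]
    (P : Measure Ω) [IsProbabilityMeasure P]
    (Y : Ω → ℝ) (D : Ω → ℕ) (M : Ω → 𝓜) (X : Ω → 𝓧)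
    (hY : Measurable Y) (hD : Measurable D) (hM : Measurable M) (hX : Measurable X)
    -- potential outcomes and potential mediators
    (Ypot : ℕ → 𝓜 → Ω → ℝ) (Mpot : ℕ → Ω → 𝓜)
    (hYpot : ∀ d m, Measurable (Ypot d m)) (hMpot : ∀ d, Measurable (Mpot d))
    -- Assumption 1.1 (consistency / SUTVA)
    (hcons_M : ∀ d ω, D ω = d → Mpot d ω = M ω)
    (hcons_Y : ∀ d m ω, D ω = d → M ω = m → Ypot d m ω = Y ω)
    -- Assumption 1.2 : (Y(d,m), M(d')) ⫫ D | X
    (hA2 : ∀ d ≤ 1, ∀ d' ≤ 1, ∀ m : 𝓜,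
      CondIndepFun (MeasurableSpace.comap X inferInstance) hX.comap_le
        (fun ω => (Ypot d m ω, Mpot d' ω)) D P)
    -- Assumption 1.3 : Y(d,m) ⫫ M(d') | (D, X)
    (hA3 : ∀ d ≤ 1, ∀ d' ≤ 1, ∀ m : 𝓜,
      CondIndepFun (MeasurableSpace.comap (fun ω => (D ω, X ω)) inferInstance)
        (hD.prodMk hX).comap_le (Ypot d m) (Mpot d') P)
    -- Assumption 1.4 (common support) : P(D = d | M, X) > 0 a.s.
    (hA4 : ∀ d ≤ 1, ∀ᵐ ω ∂P,
      0 < (P[(fun ω' => if D ω' = d then (1:ℝ) else 0) |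
        MeasurableSpace.comap (fun ω' => (M ω', X ω')) inferInstance]) ω)
    -- threshold and treatment indices
    (a : ℝ) (d d' : ℕ) (hd : d ≤ 1) (hd' : d' ≤ 1)
    -- F_a : version of P(Y ≤ a | D, M, X)
    (F : ℕ → 𝓜 → 𝓧 → ℝ)
    (hFmeas : Measurable (fun t : ℕ × 𝓜 × 𝓧 => F t.1 t.2.1 t.2.2))
    (hFver : (fun ω => F (D ω) (M ω) (X ω)) =ᵐ[P]
      P[(fun ω' => if Y ω' ≤ a then (1:ℝ) else 0) |
        MeasurableSpace.comap (fun ω' => (D ω', M ω', X ω')) inferInstance])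
    -- g_{d,·,a} : version of E[F_a(d, M, X) | D, X]
    (g : ℕ → 𝓧 → ℝ)
    (hgmeas : Measurable (fun t : ℕ × 𝓧 => g t.1 t.2))
    (hgver : (fun ω => g (D ω) (X ω)) =ᵐ[P]
      P[(fun ω' => F d (M ω') (X ω')) |
        MeasurableSpace.comap (fun ω' => (D ω', X ω')) inferInstance]) :
    (P {ω | Ypot d (Mpot d' ω) ω ≤ a}).toReal = ∫ ω, g d' (X ω) ∂P := by
  have h : IsMediationModel P Y D M X Ypot Mpot :=
    ⟨hY, hD, hM, hX, hYpot, hMpot, hcons_M, hcons_Y, hA2, hA3, hA4⟩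
  have hg := h.ae_ofReal_regression_eq_tsum hd hd' ⟨hFmeas, hFver⟩ ⟨hgmeas, hgver⟩
  have hterm : ∀ m, AEMeasurable (fun ω => ENNReal.ofReal
      ((P⟦Ypot d m ⁻¹' Set.Iic a | MeasurableSpace.comap X inferInstance⟧) ω *
        (P⟦Mpot d' ⁻¹' {m} | MeasurableSpace.comap X inferInstance⟧) ω)) P := fun m =>
    ((stronglyMeasurable_condExp.measurable.mul stronglyMeasurable_condExp.measurable).mono
      hX.comap_le le_rfl).ennreal_ofReal.aemeasurable
  rw [h.measure_potential_le_eq_tsum hd hd' a, integral_eq_lintegral_of_nonneg_ae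
    (hg.mono fun _ hω => hω.1) ((hgmeas.comp (measurable_const.prodMk measurable_id)).comp
      hX).aestronglyMeasurable, lintegral_congr_ae (hg.mono fun _ hω => hω.2),
    lintegral_tsum hterm]

/-- Under Assumptions 1.1–1.4, for every `a ∈ ℝ` and `(d, d') ∈ {0,1}²`,
the c.d.f. of the potential outcome `Y(d, M(d'))` at `a` is identified as
`P(Y(d, M(d')) ≤ a) = E[g_{d,d',a}(X)]`, where `g` is (a measurable version of)
`E[F_a(d, M, X) | D = d', X = x]`, `F_a(D,M,X)` being a version of `P(Y ≤ a | D, M, X)`. -/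
theorem statement_0
    {Ω 𝓜 𝓧 : Type*} [MeasurableSpace Ω] [StandardBorelSpace Ω]
    [MeasurableSpace 𝓜] [Countable 𝓜] [MeasurableSingletonClass 𝓜] [MeasurableSpace 𝓧]
    (P : Measure Ω) [IsProbabilityMeasure P]
    (Y : Ω → ℝ) (D : Ω → ℕ) (M : Ω → 𝓜) (X : Ω → 𝓧)
    (hY : Measurable Y) (hD : Measurable D) (hM : Measurable M) (hX : Measurable X)
    (hD01 : ∀ ω, D ω ≤ 1)
    -- potential outcomes and potential mediators
    (Ypot : ℕ → 𝓜 → Ω → ℝ) (Mpot : ℕ → Ω → 𝓜)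
    (hYpot : ∀ d m, Measurable (Ypot d m)) (hMpot : ∀ d, Measurable (Mpot d))
    -- Assumption 1.1 (consistency / SUTVA)
    (hcons_M : ∀ d ω, D ω = d → Mpot d ω = M ω)
    (hcons_Y : ∀ d m ω, D ω = d → M ω = m → Ypot d m ω = Y ω)
    -- Assumption 1.2 : (Y(d,m), M(d')) ⫫ D | X
    (hA2 : ∀ d ≤ 1, ∀ d' ≤ 1, ∀ m : 𝓜,
      CondIndepFun (MeasurableSpace.comap X inferInstance) hX.comap_le
        (fun ω => (Ypot d m ω, Mpot d' ω)) D P)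
    -- Assumption 1.3 : Y(d,m) ⫫ M(d') | (D, X)
    (hA3 : ∀ d ≤ 1, ∀ d' ≤ 1, ∀ m : 𝓜,
      CondIndepFun (MeasurableSpace.comap (fun ω => (D ω, X ω)) inferInstance)
        (hD.prodMk hX).comap_le (Ypot d m) (Mpot d') P)
    -- Assumption 1.4 (common support) : P(D = d | M, X) > 0 a.s.
    (hA4 : ∀ d ≤ 1, ∀ᵐ ω ∂P,
      0 < (P[(fun ω' => if D ω' = d then (1:ℝ) else 0) |
        MeasurableSpace.comap (fun ω' => (M ω', X ω')) inferInstance]) ω)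
    -- threshold and treatment indices
    (a : ℝ) (d d' : ℕ) (hd : d ≤ 1) (hd' : d' ≤ 1)
    -- F_a : version of P(Y ≤ a | D, M, X)
    (F : ℕ → 𝓜 → 𝓧 → ℝ)
    (hFmeas : Measurable (fun t : ℕ × 𝓜 × 𝓧 => F t.1 t.2.1 t.2.2))
    (hFver : (fun ω => F (D ω) (M ω) (X ω)) =ᵐ[P]
      P[(fun ω' => if Y ω' ≤ a then (1:ℝ) else 0) |
        MeasurableSpace.comap (fun ω' => (D ω', M ω', X ω')) inferInstance])
    -- g_{d,·,a} : version of E[F_a(d, M, X) | D, X]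
    (g : ℕ → 𝓧 → ℝ)
    (hgmeas : Measurable (fun t : ℕ × 𝓧 => g t.1 t.2))
    (hgver : (fun ω => g (D ω) (X ω)) =ᵐ[P]
      P[(fun ω' => F d (M ω') (X ω')) |
        MeasurableSpace.comap (fun ω' => (D ω', X ω')) inferInstance]) :
    (P {ω | Ypot d (Mpot d' ω) ω ≤ a}).toReal = ∫ ω, g d' (X ω) ∂P :=
  statement_0_general P Y D M X hY hD hM hX Ypot Mpot hYpot hMpot hcons_M hcons_Y hA2 hA3 hA4 a d d'
    hd hd' F hFmeas hFver g hgmeas hgver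
end

section
/- Under Assumptions 1.1 and 1.2 and the overlap condition ε₁ ≤ p_d(X) P-a.s., for every a ∈ ℝ and d ∈ {0,1}, the doubly robust score with both treatment state indices equal to d satisfies E[ (1{D=d}/p_d(X))·(Y_a − G_a(d,X)) + G_a(d,X) ] = P(Y(d, M(d)) ≤ a), where G_a(δ,x) is measurable with G_a(D,X) a version of P(Y ≤ a | D, X). -/
open MeasureTheory ProbabilityTheory

/-!
Write `w = 1{D = d} / p_d(X)`. Since `p_d(X) = P(D = d | X)`, pulling `X`-measurable factors out
of `E[· | X]` gives `E[w h(X)] = E[h(X)]` for every integrable `h(X)`, so the augmentation term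
`G_a(d,X) - w G_a(d,X)` has mean zero and the score reduces to `E[w 1{Y ≤ a}]`. By consistency,
`w 1{Y ≤ a} = w 1{Y(d,M(d)) ≤ a}`. Splitting this event by the value `m` of `M(d)`, conditional
independence of `(Y(d,m), M(d))` and `D` given `X` turns each piece into
`E[P(Y(d,m) ≤ a, M(d) = m | X)] = P(Y(d,m) ≤ a, M(d) = m)`, and summing over the countably many
`m` gives `P(Y(d,M(d)) ≤ a)`. Integrability of `G_a(d,X)` also comes from overlap: `|G_a(d,X)| ≤ 1`
almost surely on `{D = d}`, and an `X`-measurable event that is null on `{D = d}` is null, because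
`P(D = d | X) ≥ ε₁`.
-/

theorem setOf_apply_mem_eq_iUnion {α β ι : Type*} (f : ι → α → β) (N : α → ι) (T : Set β) :
    {x | f (N x) x ∈ T} = ⋃ i, (fun x => (f i x, N x)) ⁻¹' (T ×ˢ {i}) := by
  ext x
  simp

theorem pairwise_disjoint_preimage_prod_singleton {α β ι : Type*} (f : ι → α → β) (N : α → ι)
    (T : Set β) :
    Pairwise (Function.onFun Disjoint fun i => (fun x => (f i x, N x)) ⁻¹' (T ×ˢ {i})) := by
  intro i j hij
  exact Set.disjoint_left.mpr fun x hi hj => hij (hi.2.symm.trans hj.2)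

section InverseProbabilityWeighting

variable {Ω : Type*} {m mΩ : MeasurableSpace Ω} {P : Measure Ω}
  {C : Set Ω} {g : Ω → ℝ} {ε : ℝ}

theorem integral_mul_eq_integral_mul_condExp [IsFiniteMeasure P] (hm : m ≤ mΩ) {f u : Ω → ℝ}
    (hf : StronglyMeasurable[m] f) (hfu : Integrable (f * u) P) (hu : Integrable u P) :
    ∫ ω, f ω * u ω ∂P = ∫ ω, f ω * P[u | m] ω ∂P :=
  calc ∫ ω, f ω * u ω ∂P = ∫ ω, P[f * u | m] ω ∂P := (integral_condExp hm).symm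
    _ = ∫ ω, f ω * P[u | m] ω ∂P :=
      integral_congr_ae (condExp_mul_of_stronglyMeasurable_left hf hfu hu)

theorem ae_of_ae_imp_of_le_condExp [IsFiniteMeasure P] (hm : m ≤ mΩ) (hC : MeasurableSet C)
    (hg : g =ᵐ[P] P⟦C | m⟧) (hε : 0 < ε) (hge : ∀ᵐ ω ∂P, ε ≤ g ω) {A : Set Ω}
    (hA : MeasurableSet[m] A) (hCA : ∀ᵐ ω ∂P, ω ∈ C → ω ∈ A) : ∀ᵐ ω ∂P, ω ∈ A := by
  have hnull : P (Aᶜ ∩ C) = 0 := by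
    rw [measure_eq_zero_iff_ae_notMem]
    filter_upwards [hCA] with ω h using fun hω => hω.1 (h hω.2)
  have hzero : ∫ ω in Aᶜ, (P⟦C | m⟧) ω ∂P = 0 := by
    rw [setIntegral_condExp hm ((integrable_const (1 : ℝ)).indicator hC) hA.compl,
      setIntegral_indicator hC, Measure.restrict_eq_zero.mpr hnull, integral_zero_measure]
  have hle : ε * P.real Aᶜ ≤ ∫ ω in Aᶜ, (P⟦C | m⟧) ω ∂P := by
    rw [mul_comm, ← smul_eq_mul, ← setIntegral_const]
    refine setIntegral_mono_ae integrableOn_const integrable_condExp.integrableOn ?_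
    filter_upwards [hg, hge] with ω hgω hεω
    rwa [← hgω]
  have hAc : P.real Aᶜ = 0 := le_antisymm (by nlinarith) measureReal_nonneg
  exact ae_iff.mpr ((measureReal_eq_zero_iff).mp hAc)

theorem ae_norm_inv_le_inv (hε : 0 < ε) (hge : ∀ᵐ ω ∂P, ε ≤ g ω) :
    ∀ᵐ ω ∂P, ‖(g ω)⁻¹‖ ≤ ε⁻¹ := by
  filter_upwards [hge] with ω hω
  rw [norm_inv, Real.norm_of_nonneg (hε.le.trans hω)]
  exact inv_anti₀ hε hω

theorem MeasureTheory.Integrable.indicator_div_mul {u : Ω → ℝ} (hu : Integrable u P)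
    (hC : MeasurableSet C) (hg : Measurable g) (hε : 0 < ε) (hge : ∀ᵐ ω ∂P, ε ≤ g ω) :
    Integrable (fun ω => C.indicator (fun _ => (1 : ℝ)) ω / g ω * u ω) P := by
  refine hu.bdd_mul (c := ε⁻¹) ((measurable_const.indicator hC).div hg).aestronglyMeasurable ?_
  filter_upwards [ae_norm_inv_le_inv hε hge] with ω hω
  rw [div_eq_mul_inv, norm_mul]
  refine (mul_le_of_le_one_left (norm_nonneg _) ?_).trans hω
  by_cases hωC : ω ∈ C <;> simp [hωC]

theorem integral_indicator_div_mul_eq_integral [IsFiniteMeasure P] (hm : m ≤ mΩ)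
    (hC : MeasurableSet C) (hg_meas : StronglyMeasurable[m] g) (hg : g =ᵐ[P] P⟦C | m⟧) (hε : 0 < ε)
    (hge : ∀ᵐ ω ∂P, ε ≤ g ω) {h : Ω → ℝ} (hh_meas : StronglyMeasurable[m] h)
    (hh : Integrable h P) :
    ∫ ω, C.indicator (fun _ => (1 : ℝ)) ω / g ω * h ω ∂P = ∫ ω, h ω ∂P := by
  have hint := hh.indicator_div_mul hC (hg_meas.mono hm).measurable hε hge
  calc ∫ ω, C.indicator (fun _ => (1 : ℝ)) ω / g ω * h ω ∂P
      = ∫ ω, h ω / g ω * C.indicator (fun _ => (1 : ℝ)) ω ∂P := by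
        congr 1 with ω; ring
    _ = ∫ ω, h ω / g ω * (P⟦C | m⟧) ω ∂P :=
        integral_mul_eq_integral_mul_condExp hm (hh_meas.div hg_meas)
          (hint.congr (ae_of_all _ fun ω => by simp only [Pi.mul_apply]; ring))
          ((integrable_const (1 : ℝ)).indicator hC)
    _ = ∫ ω, h ω ∂P := integral_congr_ae <| by
        filter_upwards [hg, hge] with ω hgω hεω
        rw [← hgω]
        field_simp [(hε.trans_le hεω).ne']

theorem integral_indicator_div_mul_sub_add [IsFiniteMeasure P] (hm : m ≤ mΩ)
    (hC : MeasurableSet C) (hg_meas : StronglyMeasurable[m] g) (hg : g =ᵐ[P] P⟦C | m⟧)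
    (hε : 0 < ε) (hge : ∀ᵐ ω ∂P, ε ≤ g ω) {u h : Ω → ℝ} (hu : Integrable u P)
    (hh_meas : StronglyMeasurable[m] h) (hh : Integrable h P) :
    ∫ ω, (C.indicator (fun _ => (1 : ℝ)) ω / g ω * (u ω - h ω) + h ω) ∂P
      = ∫ ω, C.indicator (fun _ => (1 : ℝ)) ω / g ω * u ω ∂P := by
  have hg' := (hg_meas.mono hm).measurable
  have hwu := hu.indicator_div_mul hC hg' hε hge
  have hwh := hh.indicator_div_mul hC hg' hε hge
  simp only [mul_sub]
  rw [integral_add (hwu.sub' hwh) hh, integral_sub hwu hwh,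
    integral_indicator_div_mul_eq_integral hm hC hg_meas hg hε hge hh_meas hh, sub_add_cancel]

theorem integral_indicator_div_mul_ite_le_eq_setIntegral {Y Y' : Ω → ℝ} {a : ℝ}
    (hS : MeasurableSet {ω | Y' ω ≤ a}) (hcons : ∀ ω ∈ C, Y' ω = Y ω) :
    ∫ ω, C.indicator (fun _ => (1 : ℝ)) ω / g ω * (if Y ω ≤ a then 1 else 0) ∂P
      = ∫ ω in {ω | Y' ω ≤ a}, C.indicator (fun _ => (1 : ℝ)) ω / g ω ∂P := by
  rw [← integral_indicator hS]
  congr 1 with ω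
  by_cases hωC : ω ∈ C
  · by_cases hYa : Y ω ≤ a <;> simp [hωC, hcons ω hωC, hYa]
  · simp [Set.indicator_apply, hωC]

theorem setIntegral_indicator_div_eq_measureReal [IsFiniteMeasure P] (hm : m ≤ mΩ)
    (hC : MeasurableSet C) (hg_meas : StronglyMeasurable[m] g) (hg : g =ᵐ[P] P⟦C | m⟧)
    (hε : 0 < ε) (hge : ∀ᵐ ω ∂P, ε ≤ g ω) {B : Set Ω} (hB : MeasurableSet B)
    (hBC : P⟦B ∩ C | m⟧ =ᵐ[P] fun ω => (P⟦B | m⟧) ω * (P⟦C | m⟧) ω) :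
    ∫ ω in B, C.indicator (fun _ => (1 : ℝ)) ω / g ω ∂P = P.real B := by
  have hBC_int : Integrable ((B ∩ C).indicator fun _ => (1 : ℝ)) P :=
    (integrable_const (1 : ℝ)).indicator (hB.inter hC)
  calc ∫ ω in B, C.indicator (fun _ => (1 : ℝ)) ω / g ω ∂P
      = ∫ ω, (g ω)⁻¹ * (B ∩ C).indicator (fun _ => (1 : ℝ)) ω ∂P := by
        rw [← integral_indicator hB]
        congr 1 with ω
        by_cases hωB : ω ∈ B <;> by_cases hωC : ω ∈ C <;> simp [hωB, hωC]
    _ = ∫ ω, (g ω)⁻¹ * (P⟦B ∩ C | m⟧) ω ∂P :=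
        integral_mul_eq_integral_mul_condExp hm hg_meas.measurable.inv.stronglyMeasurable
          (hBC_int.bdd_mul (hg_meas.mono hm).measurable.inv.aestronglyMeasurable
            (ae_norm_inv_le_inv hε hge)) hBC_int
    _ = ∫ ω, (P⟦B | m⟧) ω ∂P := integral_congr_ae <| by
        filter_upwards [hBC, hg, hge] with ω hBCω hgω hεω
        rw [hBCω, ← hgω]
        field_simp [(hε.trans_le hεω).ne']
    _ = P.real B := by rw [integral_condExp hm, integral_indicator_const _ hB, smul_eq_mul, mul_one]

theorem setIntegral_iUnion_indicator_div_eq_measureReal [IsFiniteMeasure P] (hm : m ≤ mΩ)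
    (hC : MeasurableSet C) (hg_meas : StronglyMeasurable[m] g) (hg : g =ᵐ[P] P⟦C | m⟧)
    (hε : 0 < ε) (hge : ∀ᵐ ω ∂P, ε ≤ g ω) {ι : Type*} [Countable ι] {B : ι → Set Ω}
    (hB : ∀ i, MeasurableSet (B i)) (hdisj : Pairwise (Function.onFun Disjoint B))
    (hBC : ∀ i, P⟦B i ∩ C | m⟧ =ᵐ[P] fun ω => (P⟦B i | m⟧) ω * (P⟦C | m⟧) ω) :
    ∫ ω in ⋃ i, B i, C.indicator (fun _ => (1 : ℝ)) ω / g ω ∂P = P.real (⋃ i, B i) := by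
  have hint : Integrable (fun ω => C.indicator (fun _ => (1 : ℝ)) ω / g ω) P := by
    simpa using (integrable_const (1 : ℝ)).indicator_div_mul hC (hg_meas.mono hm).measurable hε hge
  rw [integral_iUnion hB hdisj hint.integrableOn, measureReal_def, measure_iUnion hdisj hB,
    ENNReal.tsum_toReal_eq fun i => measure_ne_top P _]
  exact tsum_congr fun i =>
    setIntegral_indicator_div_eq_measureReal hm hC hg_meas hg hε hge (hB i) (hBC i)

theorem ae_abs_le_of_ae_abs_treatment_le [IsFiniteMeasure P] {ι 𝓧 : Type*}
    [MeasurableSpace 𝓧] {X : Ω → 𝓧} (hX : Measurable X) {D : Ω → ι} {d : ι}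
    (hC : MeasurableSet (D ⁻¹' {d}))
    (hg : g =ᵐ[P] P⟦D ⁻¹' {d} | MeasurableSpace.comap X inferInstance⟧) (hε : 0 < ε)
    (hge : ∀ᵐ ω ∂P, ε ≤ g ω) {G : ι → 𝓧 → ℝ} (hG : Measurable (G d)) {R : ℝ}
    (hGR : ∀ᵐ ω ∂P, |G (D ω) (X ω)| ≤ R) : ∀ᵐ ω ∂P, |G d (X ω)| ≤ R := by
  refine ae_of_ae_imp_of_le_condExp hX.comap_le hC hg hε hge (A := X ⁻¹' {x | |G d x| ≤ R})
    ⟨_, measurableSet_le hG.abs measurable_const, rfl⟩ ?_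
  filter_upwards [hGR] with ω hω hωC
  rwa [← show D ω = d from hωC]

theorem setIntegral_setOf_apply_mem_indicator_div_eq_measureReal [IsFiniteMeasure P]
    (hm : m ≤ mΩ) (hC : MeasurableSet C) (hg_meas : StronglyMeasurable[m] g)
    (hg : g =ᵐ[P] P⟦C | m⟧) (hε : 0 < ε) (hge : ∀ᵐ ω ∂P, ε ≤ g ω) {ι β : Type*} [Countable ι]
    [MeasurableSpace ι] [MeasurableSingletonClass ι] [MeasurableSpace β] {f : ι → Ω → β}
    {N : Ω → ι} (hf : ∀ i, Measurable (f i)) (hN : Measurable N) {T : Set β}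
    (hT : MeasurableSet T)
    (hCI : ∀ i, P⟦(fun ω => (f i ω, N ω)) ⁻¹' (T ×ˢ {i}) ∩ C | m⟧ =ᵐ[P]
      fun ω => (P⟦(fun ω => (f i ω, N ω)) ⁻¹' (T ×ˢ {i}) | m⟧) ω * (P⟦C | m⟧) ω) :
    ∫ ω in {ω | f (N ω) ω ∈ T}, C.indicator (fun _ => (1 : ℝ)) ω / g ω ∂P
      = P.real {ω | f (N ω) ω ∈ T} := by
  rw [setOf_apply_mem_eq_iUnion]
  exact setIntegral_iUnion_indicator_div_eq_measureReal hm hC hg_meas hg hε hge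
    (fun i => ((hf i).prodMk hN) (hT.prod (measurableSet_singleton i)))
    (pairwise_disjoint_preimage_prod_singleton f N T) hCI

end InverseProbabilityWeighting

theorem statement_2_general
    {Ω 𝓜 𝓧 : Type*} [MeasurableSpace Ω] [StandardBorelSpace Ω]
    [MeasurableSpace 𝓜] [Countable 𝓜] [MeasurableSingletonClass 𝓜] [MeasurableSpace 𝓧]
    (P : Measure Ω) [IsProbabilityMeasure P]
    (Y : Ω → ℝ) (D : Ω → ℕ) (M : Ω → 𝓜) (X : Ω → 𝓧)
    (hY : Measurable Y) (hD : Measurable D) (hX : Measurable X)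
    -- potential outcomes and potential mediators
    (Ypot : ℕ → 𝓜 → Ω → ℝ) (Mpot : ℕ → Ω → 𝓜)
    (hYpot : ∀ d m, Measurable (Ypot d m)) (hMpot : ∀ d, Measurable (Mpot d))
    -- Assumption 1.1 (consistency / SUTVA)
    (hcons_M : ∀ d ω, D ω = d → Mpot d ω = M ω)
    (hcons_Y : ∀ d m ω, D ω = d → M ω = m → Ypot d m ω = Y ω)
    -- Assumption 1.2 : (Y(d,m), M(d')) ⫫ D | X
    (hA2 : ∀ d ≤ 1, ∀ d' ≤ 1, ∀ m : 𝓜,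
      CondIndepFun (MeasurableSpace.comap X inferInstance) hX.comap_le
        (fun ω => (Ypot d m ω, Mpot d' ω)) D P)
    -- threshold and treatment index
    (a : ℝ) (d : ℕ) (hd : d ≤ 1)
    -- the propensity score p_δ(X), a version of P(D = δ | X), with overlap
    (p : ℕ → 𝓧 → ℝ)
    (hpmeas : Measurable (fun t : ℕ × 𝓧 => p t.1 t.2))
    (hpver : ∀ δ ≤ 1, (fun ω => p δ (X ω)) =ᵐ[P]
      P[(fun ω' => if D ω' = δ then (1:ℝ) else 0) | MeasurableSpace.comap X inferInstance])
    (ε₁ : ℝ) (hε₁ : ε₁ ∈ Set.Ioo (0:ℝ) (1/2))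
    (hoverp : ∀ δ ≤ 1, ∀ᵐ ω ∂P, ε₁ ≤ p δ (X ω) ∧ p δ (X ω) ≤ 1 - ε₁)
    -- G_a(D,X) : a version of P(Y ≤ a | D, X)
    (G : ℕ → 𝓧 → ℝ)
    (hGmeas : Measurable (fun t : ℕ × 𝓧 => G t.1 t.2))
    (hGver : (fun ω => G (D ω) (X ω)) =ᵐ[P]
      P[(fun ω' => if Y ω' ≤ a then (1:ℝ) else 0) |
        MeasurableSpace.comap (fun ω' => (D ω', X ω')) inferInstance]) :
    ∫ ω,
      ((if D ω = d then (1:ℝ) else 0) / p d (X ω)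
          * ((if Y ω ≤ a then (1:ℝ) else 0) - G d (X ω))
        + G d (X ω)) ∂P
      = (P {ω | Ypot d (Mpot d ω) ω ≤ a}).toReal := by
  set C : Set Ω := D ⁻¹' {d}
  have hC : MeasurableSet C := hD (measurableSet_singleton d)
  have hCind : ∀ ω, (if D ω = d then (1 : ℝ) else 0) = C.indicator (fun _ => 1) ω := by
    intro ω
    by_cases hω : D ω = d <;> simp [C, hω]
  have hGd : Measurable (G d) := hGmeas.comp (measurable_const.prodMk measurable_id)
  have hg_meas : StronglyMeasurable[MeasurableSpace.comap X inferInstance] fun ω => p d (X ω) :=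
    ((hpmeas.comp (measurable_const.prodMk measurable_id)).comp
      (comap_measurable X)).stronglyMeasurable
  have hg : (fun ω => p d (X ω)) =ᵐ[P] P⟦C | MeasurableSpace.comap X inferInstance⟧ := by
    simpa only [hCind] using hpver d hd
  have hge : ∀ᵐ ω ∂P, ε₁ ≤ p d (X ω) := (hoverp d hd).mono fun _ h => h.1
  have hYa : Integrable (fun ω => if Y ω ≤ a then (1 : ℝ) else 0) P :=
    Integrable.of_bound ((measurable_const.ite (measurableSet_le hY measurable_const)
      measurable_const).aestronglyMeasurable) 1 (ae_of_all _ fun ω => by split_ifs <;> simp)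
  have hGd_meas : StronglyMeasurable[MeasurableSpace.comap X inferInstance] fun ω => G d (X ω) :=
    (hGd.comp (comap_measurable X)).stronglyMeasurable
  have hGDX : ∀ᵐ ω ∂P, |G (D ω) (X ω)| ≤ 1 := by
    filter_upwards [hGver, ae_bdd_abs_condExp_of_ae_bdd_abs (R := (1 : ℝ))
      (f := fun ω => if Y ω ≤ a then (1 : ℝ) else 0)
      (ae_of_all P fun ω => by split_ifs <;> simp)] with ω hGω hbdd
    rwa [hGω]
  have hGd_int : Integrable (fun ω => G d (X ω)) P :=
    Integrable.of_bound (hGd_meas.mono hX.comap_le).aestronglyMeasurable 1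
      (ae_abs_le_of_ae_abs_treatment_le hX hC hg hε₁.1 hge hGd hGDX)
  have hS : MeasurableSet {ω | Ypot d (Mpot d ω) ω ≤ a} :=
    measurableSet_le ((measurable_from_prod_countable_right (f := fun q : 𝓜 × Ω => Ypot d q.1 q.2)
      (hYpot d)).comp ((hMpot d).prodMk measurable_id)) measurable_const
  have hcons : ∀ ω ∈ C, Ypot d (Mpot d ω) ω = Y ω := fun ω hω =>
    hcons_M d ω hω ▸ hcons_Y d (M ω) ω hω rfl
  have hCI := fun i : 𝓜 =>
    (condIndepFun_iff_condExp_inter_preimage_eq_mul ((hYpot d i).prodMk (hMpot d)) hD).mp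
      (hA2 d hd d hd i) (Set.Iic a ×ˢ {i}) {d}
      (measurableSet_Iic.prod (measurableSet_singleton i)) (measurableSet_singleton d)
  simp only [hCind]
  rw [integral_indicator_div_mul_sub_add hX.comap_le hC hg_meas hg hε₁.1 hge hYa hGd_meas hGd_int,
    integral_indicator_div_mul_ite_le_eq_setIntegral hS hcons]
  exact setIntegral_setOf_apply_mem_indicator_div_eq_measureReal hX.comap_le hC hg_meas hg hε₁.1
    hge (hYpot d) (hMpot d) measurableSet_Iic hCI

/-- Under Assumptions 1.1 and 1.2 and overlap `ε₁ ≤ p_d(X)` a.s., for every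
`a ∈ ℝ` and `d ∈ {0,1}`, the doubly robust score with both treatment indices equal to `d`
satisfies `E[(1{D=d}/p_d(X))·(Y_a − G_a(d,X)) + G_a(d,X)] = P(Y(d, M(d)) ≤ a)`, where
`G_a(D,X)` is a version of `P(Y ≤ a | D, X)`. -/
theorem statement_2
    {Ω 𝓜 𝓧 : Type*} [MeasurableSpace Ω] [StandardBorelSpace Ω]
    [MeasurableSpace 𝓜] [Countable 𝓜] [MeasurableSingletonClass 𝓜] [MeasurableSpace 𝓧]
    (P : Measure Ω) [IsProbabilityMeasure P]
    (Y : Ω → ℝ) (D : Ω → ℕ) (M : Ω → 𝓜) (X : Ω → 𝓧)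
    (hY : Measurable Y) (hD : Measurable D) (hM : Measurable M) (hX : Measurable X)
    (hD01 : ∀ ω, D ω ≤ 1)
    -- potential outcomes and potential mediators
    (Ypot : ℕ → 𝓜 → Ω → ℝ) (Mpot : ℕ → Ω → 𝓜)
    (hYpot : ∀ d m, Measurable (Ypot d m)) (hMpot : ∀ d, Measurable (Mpot d))
    -- Assumption 1.1 (consistency / SUTVA)
    (hcons_M : ∀ d ω, D ω = d → Mpot d ω = M ω)
    (hcons_Y : ∀ d m ω, D ω = d → M ω = m → Ypot d m ω = Y ω)
    -- Assumption 1.2 : (Y(d,m), M(d')) ⫫ D | X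
    (hA2 : ∀ d ≤ 1, ∀ d' ≤ 1, ∀ m : 𝓜,
      CondIndepFun (MeasurableSpace.comap X inferInstance) hX.comap_le
        (fun ω => (Ypot d m ω, Mpot d' ω)) D P)
    -- threshold and treatment index
    (a : ℝ) (d : ℕ) (hd : d ≤ 1)
    -- the propensity score p_δ(X), a version of P(D = δ | X), with overlap
    (p : ℕ → 𝓧 → ℝ)
    (hpmeas : Measurable (fun t : ℕ × 𝓧 => p t.1 t.2))
    (hpver : ∀ δ ≤ 1, (fun ω => p δ (X ω)) =ᵐ[P]
      P[(fun ω' => if D ω' = δ then (1:ℝ) else 0) | MeasurableSpace.comap X inferInstance])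
    (ε₁ : ℝ) (hε₁ : ε₁ ∈ Set.Ioo (0:ℝ) (1/2))
    (hoverp : ∀ δ ≤ 1, ∀ᵐ ω ∂P, ε₁ ≤ p δ (X ω) ∧ p δ (X ω) ≤ 1 - ε₁)
    -- G_a(D,X) : a version of P(Y ≤ a | D, X)
    (G : ℕ → 𝓧 → ℝ)
    (hGmeas : Measurable (fun t : ℕ × 𝓧 => G t.1 t.2))
    (hGver : (fun ω => G (D ω) (X ω)) =ᵐ[P]
      P[(fun ω' => if Y ω' ≤ a then (1:ℝ) else 0) |
        MeasurableSpace.comap (fun ω' => (D ω', X ω')) inferInstance]) :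
    ∫ ω,
      ((if D ω = d then (1:ℝ) else 0) / p d (X ω)
          * ((if Y ω ≤ a then (1:ℝ) else 0) - G d (X ω))
        + G d (X ω)) ∂P
      = (P {ω | Ypot d (Mpot d ω) ω ≤ a}).toReal :=
  statement_2_general P Y D M X hY hD hX Ypot Mpot hYpot hMpot hcons_M hcons_Y hA2 a d hd p hpmeas
    hpver ε₁ hε₁ hoverp G hGmeas hGver
end

section
/- Double robustness for d = d'. Let p̃ : 𝓧 → [ε, 1−ε] and h̃ : 𝓧 → [0,1] be measurable plug-in models with ε ∈ (0,1/2). Under Assumptions 1.1 and 1.2, if either (i) p̃(X) = P(D = d | X) P-a.s., or (ii) h̃(X) = P(Y ≤ a | D = d, X) P-a.s., then E[ (1{D=d}/p̃(X))·(Y_a − h̃(X)) + h̃(X) ] = P(Y(d, M(d)) ≤ a) for every a ∈ ℝ and d ∈ {0,1}. -/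
/-!
Write `B = {D = d}`, `p = P(B | X)` and `q = P(Y(d, M(d)) ≤ a | X)`. Since `p̃(X)` and `h̃(X)` are
`σ(X)`-measurable, conditioning the integrand on `X` turns its expectation into that of
`(E[1_B Y_a | X] - h̃ p) / p̃ + h̃`. Consistency identifies `1_B Y_a` with
`1_B 1{Y(d, M(d)) ≤ a}`, and conditional ignorability, applied to each of the countably many
events `{Y(d, m) ≤ a, M(d) = m}` and summed over `m`, gives `E[1_B Y_a | X] = q p`.
If `p̃ = p`, the conditioned integrand is `q`. If `h̃` is the outcome regression, the tower
property through `σ(D, X)` gives `E[1_B Y_a | X] = h̃ p`, so the first term vanishes and, by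
overlap, `h̃ = q`. In both cases the expectation is `E[q] = P(Y(d, M(d)) ≤ a)`.
-/

open MeasureTheory ProbabilityTheory Function

section

variable {Ω : Type*} {m m₂ mΩ : MeasurableSpace Ω} {μ : Measure Ω} [IsFiniteMeasure μ]

lemma condExp_iUnion_ae_eq_tsum [StandardBorelSpace Ω] (hm : m ≤ mΩ) {ι : Type*} [Countable ι]
    {A : ι → Set Ω} (hA : ∀ i, MeasurableSet (A i)) (hdisj : Pairwise (Disjoint on A)) :
    μ⟦⋃ i, A i | m⟧ =ᵐ[μ] fun ω => ∑' i, (μ⟦A i | m⟧) ω := by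
  have hunion := condExpKernel_ae_eq_condExp (μ := μ) hm (MeasurableSet.iUnion hA)
  have hparts : ∀ᵐ ω ∂μ, ∀ i, (condExpKernel μ m ω (A i)).toReal = (μ⟦A i | m⟧) ω :=
    ae_all_iff.2 fun i => condExpKernel_ae_eq_condExp hm (hA i)
  filter_upwards [hunion, hparts] with ω hunion hparts
  rw [← hunion, measureReal_def, measure_iUnion hdisj hA,
    ENNReal.tsum_toReal_eq fun i => measure_ne_top _ _]
  exact tsum_congr hparts

lemma condExp_iUnion_inter_ae_eq_mul [StandardBorelSpace Ω] (hm : m ≤ mΩ) {ι : Type*}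
    [Countable ι] {A : ι → Set Ω} {B : Set Ω} (hA : ∀ i, MeasurableSet (A i))
    (hB : MeasurableSet B) (hdisj : Pairwise (Disjoint on A))
    (hAB : ∀ i, μ⟦A i ∩ B | m⟧ =ᵐ[μ] μ⟦A i | m⟧ * μ⟦B | m⟧) :
    μ⟦(⋃ i, A i) ∩ B | m⟧ =ᵐ[μ] μ⟦⋃ i, A i | m⟧ * μ⟦B | m⟧ := by
  have hunion := condExp_iUnion_ae_eq_tsum (μ := μ) hm hA hdisj
  have hunion_inter := condExp_iUnion_ae_eq_tsum (μ := μ) hm (fun i => (hA i).inter hB)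
    fun i j hij => (hdisj hij).mono Set.inter_subset_left Set.inter_subset_left
  rw [Set.iUnion_inter]
  filter_upwards [hunion, hunion_inter, ae_all_iff.2 hAB] with ω hunion hunion_inter hAB
  simp only [Pi.mul_apply] at hAB ⊢
  rw [hunion_inter, tsum_congr hAB, tsum_mul_right, hunion]

lemma condExp_setOf_apply_mem_inter_preimage_ae_eq_mul [StandardBorelSpace Ω] (hm : m ≤ mΩ)
    {ι β γ : Type*} [Countable ι] [MeasurableSpace ι] [MeasurableSingletonClass ι]
    [MeasurableSpace β] [MeasurableSpace γ] {U : ι → Ω → β} {N : Ω → ι} {g : Ω → γ}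
    (hU : ∀ i, Measurable (U i)) (hN : Measurable N) (hg : Measurable g)
    (hindep : ∀ i, CondIndepFun m hm (fun ω => (U i ω, N ω)) g μ)
    {s : Set β} {t : Set γ} (hs : MeasurableSet s) (ht : MeasurableSet t) :
    μ⟦{ω | U (N ω) ω ∈ s} ∩ g ⁻¹' t | m⟧ =ᵐ[μ] μ⟦{ω | U (N ω) ω ∈ s} | m⟧ * μ⟦g ⁻¹' t | m⟧ := by
  set A : ι → Set Ω := fun i => (fun ω => (U i ω, N ω)) ⁻¹' (s ×ˢ {i})
  have hA : ∀ i, MeasurableSet (A i) := fun i =>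
    ((hU i).prodMk hN) (hs.prod (measurableSet_singleton i))
  have hunion : {ω | U (N ω) ω ∈ s} = ⋃ i, A i := by
    ext ω; simp [A]
  have hdisj : Pairwise (Disjoint on A) := fun i j hij =>
    Set.disjoint_left.2 fun ω hi hj => hij (hi.2.symm.trans hj.2)
  rw [hunion]
  exact condExp_iUnion_inter_ae_eq_mul hm hA (hg ht) hdisj fun i =>
    (condIndepFun_iff_condExp_inter_preimage_eq_mul ((hU i).prodMk hN) hg).1 (hindep i) _ _
      (hs.prod (measurableSet_singleton i)) ht

lemma indicator_ite_le_eq_indicator_inter {B : Set Ω} {Y V : Ω → ℝ} {a : ℝ}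
    (hcons : ∀ ω ∈ B, V ω = Y ω) :
    B.indicator (fun ω => if Y ω ≤ a then (1 : ℝ) else 0)
      = ({ω | V ω ≤ a} ∩ B).indicator fun _ => 1 := by
  ext ω
  by_cases hω : ω ∈ B
  · simp [Set.indicator, hω, hcons ω hω]
  · simp [hω]

lemma condExp_indicator_ite_le_ae_eq_mul [StandardBorelSpace Ω] (hm : m ≤ mΩ)
    {ι γ : Type*} [Countable ι] [MeasurableSpace ι] [MeasurableSingletonClass ι]
    [MeasurableSpace γ] {U : ι → Ω → ℝ} {N : Ω → ι} {g : Ω → γ} {Y : Ω → ℝ} {t : Set γ} {a : ℝ}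
    (hU : ∀ i, Measurable (U i)) (hN : Measurable N) (hg : Measurable g) (ht : MeasurableSet t)
    (hindep : ∀ i, CondIndepFun m hm (fun ω => (U i ω, N ω)) g μ)
    (hcons : ∀ ω ∈ g ⁻¹' t, U (N ω) ω = Y ω) :
    μ[(g ⁻¹' t).indicator (fun ω => if Y ω ≤ a then 1 else 0) | m]
      =ᵐ[μ] μ⟦{ω | U (N ω) ω ≤ a} | m⟧ * μ⟦g ⁻¹' t | m⟧ := by
  rw [indicator_ite_le_eq_indicator_inter hcons]
  exact condExp_setOf_apply_mem_inter_preimage_ae_eq_mul hm hU hN hg hindep measurableSet_Iic ht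

lemma condExp_indicator_ae_eq_mul_of_ae_eq_condExp (hmm₂ : m ≤ m₂) (hm₂ : m₂ ≤ mΩ)
    {B : Set Ω} {Z h : Ω → ℝ} {C : ℝ} (hB : MeasurableSet[m₂] B) (hh : StronglyMeasurable[m] h)
    (hhC : ∀ᵐ ω ∂μ, ‖h ω‖ ≤ C) (hZ : Integrable Z μ)
    (heq : ∀ᵐ ω ∂μ, ω ∈ B → h ω = μ[Z | m₂] ω) :
    μ[B.indicator Z | m] =ᵐ[μ] h * μ⟦B | m⟧ := by
  have hB_int : Integrable (B.indicator fun _ => (1 : ℝ)) μ :=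
    (integrable_const 1).indicator (hm₂ _ hB)
  calc μ[B.indicator Z | m] =ᵐ[μ] μ[μ[B.indicator Z | m₂] | m] :=
        (condExp_condExp_of_le hmm₂ hm₂).symm
    _ =ᵐ[μ] μ[h * B.indicator fun _ => 1 | m] := by
      refine condExp_congr_ae ?_
      filter_upwards [condExp_indicator hZ hB, heq] with ω hind heq
      by_cases hω : ω ∈ B <;> simp [hind, hω, heq]
    _ =ᵐ[μ] h * μ⟦B | m⟧ :=
      condExp_stronglyMeasurable_mul_of_bound (hmm₂.trans hm₂) hh hB_int C hhC

lemma integral_aipw_eq (hm : m ≤ mΩ) {B : Set Ω} {Z π h : Ω → ℝ} {ε C : ℝ} (hε : 0 < ε)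
    (hπ : StronglyMeasurable[m] π) (hπε : ∀ ω, ε ≤ π ω)
    (hh : StronglyMeasurable[m] h) (hhC : ∀ᵐ ω ∂μ, ‖h ω‖ ≤ C)
    (hB : MeasurableSet B) (hZ : Integrable Z μ) :
    ∫ ω, (B.indicator (fun _ => 1) ω / π ω * (Z ω - h ω) + h ω) ∂μ
      = ∫ ω, ((μ[B.indicator Z | m] ω - h ω * (μ⟦B | m⟧) ω) / π ω + h ω) ∂μ := by
  set e : Ω → ℝ := B.indicator fun _ => 1
  have hπinv : StronglyMeasurable[m] π⁻¹ := hπ.measurable.inv.stronglyMeasurable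
  have hπinv_bound : ∀ᵐ ω ∂μ, ‖π⁻¹ ω‖ ≤ ε⁻¹ := .of_forall fun ω => by
    rw [Pi.inv_apply, norm_inv, Real.norm_of_nonneg (hε.le.trans (hπε ω))]
    exact inv_anti₀ hε (hπε ω)
  have he : Integrable e μ := (integrable_const 1).indicator hB
  have hhe : Integrable (h * e) μ := he.bdd_mul (hh.mono hm).aestronglyMeasurable hhC
  have hg : Integrable (B.indicator Z - h * e) μ := (hZ.indicator hB).sub hhe
  have hwg : Integrable (π⁻¹ * (B.indicator Z - h * e)) μ :=
    hg.bdd_mul (hπinv.mono hm).aestronglyMeasurable hπinv_bound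
  have hh_int : Integrable h μ := .of_bound (hh.mono hm).aestronglyMeasurable C hhC
  have hF : (fun ω => e ω / π ω * (Z ω - h ω) + h ω) = π⁻¹ * (B.indicator Z - h * e) + h := by
    ext ω
    by_cases hω : ω ∈ B <;> simp [e, hω, div_eq_inv_mul]
  have hcond : μ[π⁻¹ * (B.indicator Z - h * e) + h | m]
      =ᵐ[μ] fun ω => (μ[B.indicator Z | m] ω - h ω * μ[e | m] ω) / π ω + h ω := by
    filter_upwards [condExp_add hwg hh_int m,
      condExp_stronglyMeasurable_mul_of_bound hm hπinv hg _ hπinv_bound,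
      condExp_sub (hZ.indicator hB) hhe m, condExp_stronglyMeasurable_mul_of_bound hm hh he C hhC]
      with ω hadd hmul hsub hmul'
    rw [hadd, Pi.add_apply, hmul, condExp_of_stronglyMeasurable hm hh hh_int]
    simp only [Pi.mul_apply, Pi.inv_apply] at hsub hmul' ⊢
    rw [hsub, Pi.sub_apply, hmul', div_eq_inv_mul]
  rw [hF, ← integral_condExp hm]
  exact integral_congr_ae hcond

lemma integral_aipw_eq_of_propensity_ae_eq (hm : m ≤ mΩ) {B : Set Ω} {Z π h q : Ω → ℝ}
    {ε C : ℝ} (hε : 0 < ε) (hπ : StronglyMeasurable[m] π) (hπε : ∀ ω, ε ≤ π ω)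
    (hh : StronglyMeasurable[m] h) (hhC : ∀ᵐ ω ∂μ, ‖h ω‖ ≤ C)
    (hB : MeasurableSet B) (hZ : Integrable Z μ)
    (hq : μ[B.indicator Z | m] =ᵐ[μ] q * μ⟦B | m⟧) (hπB : π =ᵐ[μ] μ⟦B | m⟧) :
    ∫ ω, (B.indicator (fun _ => 1) ω / π ω * (Z ω - h ω) + h ω) ∂μ = ∫ ω, q ω ∂μ := by
  rw [integral_aipw_eq hm hε hπ hπε hh hhC hB hZ]
  refine integral_congr_ae ?_
  filter_upwards [hq, hπB] with ω hq hπB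
  have hπ0 : π ω ≠ 0 := (hε.trans_le (hπε ω)).ne'
  rw [hq, Pi.mul_apply, ← hπB]
  field_simp
  ring

lemma integral_aipw_eq_of_outcome_ae_eq (hm : m ≤ mΩ) {B : Set Ω} {Z π h q : Ω → ℝ}
    {ε C : ℝ} (hε : 0 < ε) (hπ : StronglyMeasurable[m] π) (hπε : ∀ ω, ε ≤ π ω)
    (hh : StronglyMeasurable[m] h) (hhC : ∀ᵐ ω ∂μ, ‖h ω‖ ≤ C)
    (hB : MeasurableSet B) (hZ : Integrable Z μ)
    (hq : μ[B.indicator Z | m] =ᵐ[μ] q * μ⟦B | m⟧) (hpos : ∀ᵐ ω ∂μ, 0 < (μ⟦B | m⟧) ω)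
    (hhB : μ[B.indicator Z | m] =ᵐ[μ] h * μ⟦B | m⟧) :
    ∫ ω, (B.indicator (fun _ => 1) ω / π ω * (Z ω - h ω) + h ω) ∂μ = ∫ ω, q ω ∂μ := by
  rw [integral_aipw_eq hm hε hπ hπε hh hhC hB hZ]
  refine integral_congr_ae ?_
  filter_upwards [hq, hpos, hhB] with ω hq hpos hhB
  have hqh : q ω = h ω := mul_right_cancel₀ hpos.ne' (hq.symm.trans hhB)
  rw [hhB, Pi.mul_apply, sub_self, zero_div, zero_add, hqh]

end

theorem statement_6_general
    {Ω 𝓜 𝓧 : Type*} [MeasurableSpace Ω] [StandardBorelSpace Ω]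
    [MeasurableSpace 𝓜] [Countable 𝓜] [MeasurableSingletonClass 𝓜] [MeasurableSpace 𝓧]
    (P : Measure Ω) [IsProbabilityMeasure P]
    (Y : Ω → ℝ) (D : Ω → ℕ) (M : Ω → 𝓜) (X : Ω → 𝓧)
    (hY : Measurable Y) (hD : Measurable D) (hX : Measurable X)
    -- potential outcomes and potential mediators
    (Ypot : ℕ → 𝓜 → Ω → ℝ) (Mpot : ℕ → Ω → 𝓜)
    (hYpot : ∀ d m, Measurable (Ypot d m)) (hMpot : ∀ d, Measurable (Mpot d))
    -- Assumption 1.1 (consistency / SUTVA)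
    (hcons_M : ∀ d ω, D ω = d → Mpot d ω = M ω)
    (hcons_Y : ∀ d m ω, D ω = d → M ω = m → Ypot d m ω = Y ω)
    -- Assumption 1.2 : (Y(d,m), M(d')) ⫫ D | X
    (hA2 : ∀ d ≤ 1, ∀ d' ≤ 1, ∀ m : 𝓜,
      CondIndepFun (MeasurableSpace.comap X inferInstance) hX.comap_le
        (fun ω => (Ypot d m ω, Mpot d' ω)) D P)
    -- overlap for the true propensity score
    (ε₁ : ℝ) (hε₁ : ε₁ ∈ Set.Ioo (0:ℝ) (1/2))
    (hoverp : ∀ δ ≤ 1, ∀ᵐ ω ∂P,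
      ε₁ ≤ (P[(fun ω' => if D ω' = δ then (1:ℝ) else 0) |
              MeasurableSpace.comap X inferInstance]) ω ∧
      (P[(fun ω' => if D ω' = δ then (1:ℝ) else 0) |
              MeasurableSpace.comap X inferInstance]) ω ≤ 1 - ε₁)
    -- threshold and treatment index
    (a : ℝ) (d : ℕ) (hd : d ≤ 1)
    -- measurable plug-in models with the required ranges
    (ε : ℝ) (hε : ε ∈ Set.Ioo (0:ℝ) (1/2))
    (ptil : 𝓧 → ℝ) (htil : 𝓧 → ℝ)
    (hptilmeas : Measurable ptil) (hhtilmeas : Measurable htil)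
    (hptilrange : ∀ x, ptil x ∈ Set.Icc ε (1 - ε))
    (hhtilrange : ∀ x, htil x ∈ Set.Icc (0:ℝ) 1)
    -- (i) the propensity model is correct, or (ii) the outcome model is correct
    (hrobust :
      ((fun ω => ptil (X ω)) =ᵐ[P]
        P[(fun ω' => if D ω' = d then (1:ℝ) else 0) |
          MeasurableSpace.comap X inferInstance])
      ∨ (∀ᵐ ω ∂P, D ω = d →
          htil (X ω) = (P[(fun ω' => if Y ω' ≤ a then (1:ℝ) else 0) |
            MeasurableSpace.comap (fun ω' => (D ω', X ω')) inferInstance]) ω)) :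
    ∫ ω,
      ((if D ω = d then (1:ℝ) else 0) / ptil (X ω)
          * ((if Y ω ≤ a then (1:ℝ) else 0) - htil (X ω))
        + htil (X ω)) ∂P
      = (P {ω | Ypot d (Mpot d ω) ω ≤ a}).toReal := by
  have hB_ind : (fun ω => if D ω = d then (1 : ℝ) else 0) = (D ⁻¹' {d}).indicator fun _ => 1 := by
    ext ω; by_cases h : D ω = d <;> simp [h]
  have hZ : Integrable (fun ω => if Y ω ≤ a then (1 : ℝ) else 0) P := .of_bound
    (Measurable.ite (hY measurableSet_Iic) measurable_const measurable_const).aestronglyMeasurable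
    1 (.of_forall fun ω => by by_cases h : Y ω ≤ a <;> simp [h])
  have hq := condExp_indicator_ite_le_ae_eq_mul (μ := P) (a := a) hX.comap_le (hYpot d) (hMpot d)
    hD (measurableSet_singleton d) (hA2 d hd d hd) fun ω h => by
      rw [hcons_M d ω h, hcons_Y d (M ω) ω h rfl]
  have hS : ∫ ω, (P⟦{ω | Ypot d (Mpot d ω) ω ≤ a} | MeasurableSpace.comap X inferInstance⟧) ω ∂P
      = (P {ω | Ypot d (Mpot d ω) ω ≤ a}).toReal := by
    rw [integral_condExp hX.comap_le]
    exact integral_indicator_one <| measurableSet_le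
      ((measurable_from_prod_countable_right (f := fun p => Ypot d p.1 p.2) (hYpot d)).comp
        ((hMpot d).prodMk measurable_id)) measurable_const
  have hπ := (hptilmeas.comp (comap_measurable X)).stronglyMeasurable
  have hπε : ∀ ω, ε ≤ ptil (X ω) := fun ω => (hptilrange (X ω)).1
  have hh := (hhtilmeas.comp (comap_measurable X)).stronglyMeasurable
  have hhC : ∀ᵐ ω ∂P, ‖htil (X ω)‖ ≤ 1 := .of_forall fun ω => by
    rw [Real.norm_of_nonneg (hhtilrange (X ω)).1]; exact (hhtilrange (X ω)).2
  simp only [congrFun hB_ind]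
  rw [hB_ind] at hrobust
  rcases hrobust with hprop | hout
  · exact (integral_aipw_eq_of_propensity_ae_eq hX.comap_le hε.1 hπ hπε hh hhC
      (hD (measurableSet_singleton d)) hZ hq hprop).trans hS
  · have hpos : ∀ᵐ ω ∂P, 0 < (P⟦D ⁻¹' {d} | MeasurableSpace.comap X inferInstance⟧) ω := by
      filter_upwards [hoverp d hd] with ω hω
      exact hε₁.1.trans_le (hB_ind ▸ hω.1)
    have houtB := condExp_indicator_ae_eq_mul_of_ae_eq_condExp
      (measurable_snd.comp (comap_measurable _)).comap_le (hD.prodMk hX).comap_le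
      (measurable_fst.comp (comap_measurable _) (measurableSet_singleton d)) hh hhC hZ hout
    exact (integral_aipw_eq_of_outcome_ae_eq hX.comap_le hε.1 hπ hπε hh hhC
      (hD (measurableSet_singleton d)) hZ hq hpos houtB).trans hS

/-- Double robustness for `d = d'`. Under Assumptions 1.1 and 1.2 and overlap,
if either the plug-in propensity model `p̃` or the plug-in outcome model `h̃` is correct,
then `E[(1{D=d}/p̃(X))·(Y_a − h̃(X)) + h̃(X)] = P(Y(d, M(d)) ≤ a)`. -/
theorem statement_6
    {Ω 𝓜 𝓧 : Type*} [MeasurableSpace Ω] [StandardBorelSpace Ω]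
    [MeasurableSpace 𝓜] [Countable 𝓜] [MeasurableSingletonClass 𝓜] [MeasurableSpace 𝓧]
    (P : Measure Ω) [IsProbabilityMeasure P]
    (Y : Ω → ℝ) (D : Ω → ℕ) (M : Ω → 𝓜) (X : Ω → 𝓧)
    (hY : Measurable Y) (hD : Measurable D) (hM : Measurable M) (hX : Measurable X)
    (hD01 : ∀ ω, D ω ≤ 1)
    -- potential outcomes and potential mediators
    (Ypot : ℕ → 𝓜 → Ω → ℝ) (Mpot : ℕ → Ω → 𝓜)
    (hYpot : ∀ d m, Measurable (Ypot d m)) (hMpot : ∀ d, Measurable (Mpot d))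
    -- Assumption 1.1 (consistency / SUTVA)
    (hcons_M : ∀ d ω, D ω = d → Mpot d ω = M ω)
    (hcons_Y : ∀ d m ω, D ω = d → M ω = m → Ypot d m ω = Y ω)
    -- Assumption 1.2 : (Y(d,m), M(d')) ⫫ D | X
    (hA2 : ∀ d ≤ 1, ∀ d' ≤ 1, ∀ m : 𝓜,
      CondIndepFun (MeasurableSpace.comap X inferInstance) hX.comap_le
        (fun ω => (Ypot d m ω, Mpot d' ω)) D P)
    -- overlap for the true propensity score
    (ε₁ : ℝ) (hε₁ : ε₁ ∈ Set.Ioo (0:ℝ) (1/2))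
    (hoverp : ∀ δ ≤ 1, ∀ᵐ ω ∂P,
      ε₁ ≤ (P[(fun ω' => if D ω' = δ then (1:ℝ) else 0) |
              MeasurableSpace.comap X inferInstance]) ω ∧
      (P[(fun ω' => if D ω' = δ then (1:ℝ) else 0) |
              MeasurableSpace.comap X inferInstance]) ω ≤ 1 - ε₁)
    -- threshold and treatment index
    (a : ℝ) (d : ℕ) (hd : d ≤ 1)
    -- measurable plug-in models with the required ranges
    (ε : ℝ) (hε : ε ∈ Set.Ioo (0:ℝ) (1/2))
    (ptil : 𝓧 → ℝ) (htil : 𝓧 → ℝ)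
    (hptilmeas : Measurable ptil) (hhtilmeas : Measurable htil)
    (hptilrange : ∀ x, ptil x ∈ Set.Icc ε (1 - ε))
    (hhtilrange : ∀ x, htil x ∈ Set.Icc (0:ℝ) 1)
    -- (i) the propensity model is correct, or (ii) the outcome model is correct
    (hrobust :
      ((fun ω => ptil (X ω)) =ᵐ[P]
        P[(fun ω' => if D ω' = d then (1:ℝ) else 0) |
          MeasurableSpace.comap X inferInstance])
      ∨ (∀ᵐ ω ∂P, D ω = d →
          htil (X ω) = (P[(fun ω' => if Y ω' ≤ a then (1:ℝ) else 0) |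
            MeasurableSpace.comap (fun ω' => (D ω', X ω')) inferInstance]) ω)) :
    ∫ ω,
      ((if D ω = d then (1:ℝ) else 0) / ptil (X ω)
          * ((if Y ω ≤ a then (1:ℝ) else 0) - htil (X ω))
        + htil (X ω)) ∂P
      = (P {ω | Ypot d (Mpot d ω) ω ≤ a}).toReal :=
  statement_6_general P Y D M X hY hD hX Ypot Mpot hYpot hMpot hcons_M hcons_Y hA2 ε₁ hε₁ hoverp a d
    hd ε hε ptil htil hptilmeas hhtilmeas hptilrange hhtilrange hrobust
end

section
/- Exact Neyman orthogonality of the efficient score (case d ≠ d'). Define μ_{d,d',a}(t₁,t₂,t₃,t₄) := 1{D=d}·((1−t₂)/((1−t₁)t₂))·(Y_a − t₃) + (1{D=d'}/(1−t₁))·(t₃ − t₄) + t₄, and let the truth be t⁰ := (g₁⁰(X), g₂⁰(M,X), g₃⁰(d,M,X), g₄⁰(d',X)) where g₁⁰(X) := P(D=d|X), g₂⁰(M,X) := P(D=d|M,X), g₃⁰(D,M,X) := P(Y≤a|D,M,X), g₄⁰(D,X) := E[g₃⁰(d,M,X)|D,X]. Then for any bounded measurable perturbation functions h₁(X), h₂(M,X),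 h₃(M,X), h₄(X) taking values such that t⁰ + r·(h − t⁰) stays in the overlap bands for small r, the Gateaux derivative of the mean score at the truth vanishes: d/dr E[ μ_{d,d',a}(t⁰ + r(h − t⁰)) ] |_{r=0} = 0; equivalently, each of the four directional derivative expectations E[∂_{t_i}μ_{d,d',a}(t⁰)·(h_i − t_i⁰)] equals 0 for i = 1,2,3,4. -/
/-!
The mean score is differentiated under the integral sign: along the segment `t⁰ + r (h - t⁰)`,
`|r|` small, the nuisance values stay in halved overlap bands, where the partial derivatives of
the score are uniformly bounded. This reduces the Gateaux derivative to the four directional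
terms `E[∂ᵢμ(t⁰) (hᵢ - tᵢ⁰)]`. Each of them is the mean of a bounded function of some conditioning
variables `Z` times a residual `f - E[f | Z]`, hence vanishes: direction `t₂` and the `D = d`
part of `t₁` use `Y_a - P(Y ≤ a | D, M, X)`, the `D = d'` part of `t₁` uses
`g₃⁰(d, M, X) - E[g₃⁰(d, M, X) | D, X]`, direction `t₃` uses `1{D = d} - P(D = d | M, X)` and
direction `t₄` uses `1{D = d} - P(D = d | X)`.
-/

open MeasureTheory

noncomputable section

/-- `μ_{d,d',a}(p, q, t, s)` evaluated at `1{D = d} = iD`, `1{D = d'} = iD'`, `Y_a = y`;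
`medScoreDerivP`, …, `medScoreDerivS` are its partial derivatives in `p, q, t, s`. -/
def medScore (iD iD' y p q t s : ℝ) : ℝ :=
  iD * ((1 - q) / ((1 - p) * q)) * (y - t) + iD' / (1 - p) * (t - s) + s

def medScoreDerivP (iD iD' y p q t s : ℝ) : ℝ :=
  iD * (1 - q) / ((1 - p) ^ 2 * q) * (y - t) + iD' / (1 - p) ^ 2 * (t - s)

def medScoreDerivQ (iD y p q t : ℝ) : ℝ :=
  -(iD / ((1 - p) * q ^ 2)) * (y - t)

def medScoreDerivT (iD iD' p q : ℝ) : ℝ :=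
  iD' / (1 - p) - iD * (1 - q) / ((1 - p) * q)

def medScoreDerivS (iD' p : ℝ) : ℝ :=
  1 - iD' / (1 - p)

def medScoreDeriv (iD iD' y p q t s u₁ u₂ u₃ u₄ : ℝ) : ℝ :=
  medScoreDerivP iD iD' y p q t s * u₁ + medScoreDerivQ iD y p q t * u₂
    + medScoreDerivT iD iD' p q * u₃ + medScoreDerivS iD' p * u₄

end

theorem HasDerivAt.medScore (iD iD' y : ℝ) {p q t s : ℝ → ℝ} {p' q' t' s' r : ℝ}
    (hp : HasDerivAt p p' r) (hq : HasDerivAt q q' r) (ht : HasDerivAt t t' r)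
    (hs : HasDerivAt s s' r) (hp1 : 1 - p r ≠ 0) (hq0 : q r ≠ 0) :
    HasDerivAt (fun r => medScore iD iD' y (p r) (q r) (t r) (s r))
      (medScoreDeriv iD iD' y (p r) (q r) (t r) (s r) p' q' t' s') r := by
  have h := ((((hq.const_sub 1).div ((hp.const_sub 1).mul hq) (mul_ne_zero hp1 hq0)).const_mul
    iD).mul (ht.const_sub y)).add
      (((hasDerivAt_const r iD').div (hp.const_sub 1) hp1).mul (ht.sub hs)) |>.add hs
  refine h.congr_deriv (f := fun r => _root_.medScore iD iD' y (p r) (q r) (t r) (s r)) ?_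
  simp only [medScoreDeriv, medScoreDerivP, medScoreDerivQ, medScoreDerivT, medScoreDerivS,
    Pi.mul_apply, Pi.div_apply, Pi.sub_apply]
  field_simp
  ring

structure MedScoreRegion (ε₁ ε₂ iD iD' y p q t s : ℝ) : Prop where
  abs_iD_le : |iD| ≤ 1
  abs_iD'_le : |iD'| ≤ 1
  le_one_sub_p : ε₁ ≤ 1 - p
  le_q : ε₂ ≤ q
  q_le_one : q ≤ 1
  abs_y_sub_t_le : |y - t| ≤ 2
  abs_t_sub_s_le : |t - s| ≤ 2

namespace MedScoreRegion

variable {ε₁ ε₂ iD iD' y p q t s : ℝ}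

lemma of_segment {u₁ u₂ u₃ u₄ r : ℝ} (hiD : |iD| ≤ 1) (hiD' : |iD'| ≤ 1)
    (hy : y ∈ Set.Icc (0:ℝ) 1) (hp : p ≤ 1 - ε₁) (hq : ε₂ ≤ q ∧ q ≤ 1 - ε₂)
    (ht : t ∈ Set.Icc (0:ℝ) 1) (hs : s ∈ Set.Icc (0:ℝ) 1) (hu₁ : |u₁| ≤ 1) (hu₂ : |u₂| ≤ 1)
    (hu₃ : |u₃| ≤ 1) (hu₄ : |u₄| ≤ 1) (hr : |r| ≤ min ε₁ ε₂ / 2) :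
    MedScoreRegion (ε₁ / 2) (ε₂ / 2) iD iD' y (p + r * u₁) (q + r * u₂) (t + r * u₃)
      (s + r * u₄) := by
  have hmul : ∀ {u : ℝ}, |u| ≤ 1 → |r * u| ≤ min ε₁ ε₂ / 2 := fun hu => by
    rw [abs_mul]; exact (mul_le_of_le_one_right (abs_nonneg r) hu).trans hr
  have h₁ := abs_le.1 (hmul hu₁)
  have h₂ := abs_le.1 (hmul hu₂)
  have h₃ := abs_le.1 (hmul hu₃)
  have h₄ := abs_le.1 (hmul hu₄)
  have hmin₁ := min_le_left ε₁ ε₂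
  have hmin₂ := min_le_right ε₁ ε₂
  obtain ⟨hy₀, hy₁⟩ := hy
  obtain ⟨ht₀, ht₁⟩ := ht
  obtain ⟨hs₀, hs₁⟩ := hs
  exact ⟨hiD, hiD', by linarith, by linarith, by linarith, abs_le.2 ⟨by linarith, by linarith⟩,
    abs_le.2 ⟨by linarith, by linarith⟩⟩

lemma le_abs_one_sub_p (h : MedScoreRegion ε₁ ε₂ iD iD' y p q t s) : ε₁ ≤ |1 - p| :=
  h.le_one_sub_p.trans (le_abs_self _)

lemma le_abs_q (h : MedScoreRegion ε₁ ε₂ iD iD' y p q t s) : ε₂ ≤ |q| :=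
  h.le_q.trans (le_abs_self _)

lemma abs_one_sub_q_le (h : MedScoreRegion ε₁ ε₂ iD iD' y p q t s) (hε₂ : 0 < ε₂) :
    |1 - q| ≤ 1 :=
  abs_le.2 ⟨by linarith [h.q_le_one], by linarith [h.le_q]⟩

lemma abs_medScore_le (h : MedScoreRegion ε₁ ε₂ iD iD' y p q t s) (hε₁ : 0 < ε₁)
    (hε₂ : 0 < ε₂) (hs : |s| ≤ 1) :
    |medScore iD iD' y p q t s| ≤ 1 * (1 / (ε₁ * ε₂)) * 2 + 1 / ε₁ * 2 + 1 := by
  have := h.abs_iD_le; have := h.abs_iD'_le; have := h.abs_y_sub_t_le; have := h.abs_t_sub_s_le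
  have := h.le_abs_one_sub_p; have := h.le_abs_q; have := h.abs_one_sub_q_le hε₂
  refine (abs_add_le _ _).trans (add_le_add ((abs_add_le _ _).trans ?_) hs)
  simp only [abs_mul, abs_div]
  gcongr

lemma abs_medScoreDerivP_le (h : MedScoreRegion ε₁ ε₂ iD iD' y p q t s) (hε₁ : 0 < ε₁)
    (hε₂ : 0 < ε₂) :
    |medScoreDerivP iD iD' y p q t s| ≤ 1 * 1 / (ε₁ ^ 2 * ε₂) * 2 + 1 / ε₁ ^ 2 * 2 := by
  have := h.abs_iD_le; have := h.abs_iD'_le; have := h.abs_y_sub_t_le; have := h.abs_t_sub_s_le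
  have := h.le_abs_one_sub_p; have := h.le_abs_q; have := h.abs_one_sub_q_le hε₂
  refine (abs_add_le _ _).trans ?_
  simp only [abs_mul, abs_div, abs_pow]
  gcongr

lemma abs_medScoreDerivQ_le (h : MedScoreRegion ε₁ ε₂ iD iD' y p q t s) (hε₁ : 0 < ε₁)
    (hε₂ : 0 < ε₂) : |medScoreDerivQ iD y p q t| ≤ 1 / (ε₁ * ε₂ ^ 2) * 2 := by
  have := h.abs_iD_le; have := h.abs_y_sub_t_le; have := h.le_abs_one_sub_p; have := h.le_abs_q
  simp only [medScoreDerivQ, abs_mul, abs_neg, abs_div, abs_pow]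
  gcongr

lemma abs_medScoreDerivT_le (h : MedScoreRegion ε₁ ε₂ iD iD' y p q t s) (hε₁ : 0 < ε₁)
    (hε₂ : 0 < ε₂) : |medScoreDerivT iD iD' p q| ≤ 1 / ε₁ + 1 * 1 / (ε₁ * ε₂) := by
  have := h.abs_iD_le; have := h.abs_iD'_le; have := h.le_abs_one_sub_p; have := h.le_abs_q
  have := h.abs_one_sub_q_le hε₂
  refine (abs_sub _ _).trans ?_
  simp only [abs_mul, abs_div]
  gcongr

lemma abs_medScoreDerivS_le (h : MedScoreRegion ε₁ ε₂ iD iD' y p q t s) (hε₁ : 0 < ε₁) :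
    |medScoreDerivS iD' p| ≤ 1 + 1 / ε₁ := by
  have := h.abs_iD'_le; have := h.le_abs_one_sub_p
  refine (abs_sub _ _).trans ?_
  simp only [abs_one, abs_div]
  gcongr

lemma abs_medScoreDeriv_le (h : MedScoreRegion ε₁ ε₂ iD iD' y p q t s) (hε₁ : 0 < ε₁)
    (hε₂ : 0 < ε₂) {u₁ u₂ u₃ u₄ : ℝ} (hu₁ : |u₁| ≤ 1) (hu₂ : |u₂| ≤ 1) (hu₃ : |u₃| ≤ 1)
    (hu₄ : |u₄| ≤ 1) :
    |medScoreDeriv iD iD' y p q t s u₁ u₂ u₃ u₄|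
      ≤ (1 * 1 / (ε₁ ^ 2 * ε₂) * 2 + 1 / ε₁ ^ 2 * 2) * 1 + 1 / (ε₁ * ε₂ ^ 2) * 2 * 1
        + (1 / ε₁ + 1 * 1 / (ε₁ * ε₂)) * 1 + (1 + 1 / ε₁) * 1 := by
  have := h.abs_medScoreDerivP_le hε₁ hε₂; have := h.abs_medScoreDerivQ_le hε₁ hε₂
  have := h.abs_medScoreDerivT_le hε₁ hε₂; have := h.abs_medScoreDerivS_le hε₁
  calc |medScoreDeriv iD iD' y p q t s u₁ u₂ u₃ u₄|
      ≤ |medScoreDerivP iD iD' y p q t s| * |u₁| + |medScoreDerivQ iD y p q t| * |u₂|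
        + |medScoreDerivT iD iD' p q| * |u₃| + |medScoreDerivS iD' p| * |u₄| := by
        simp only [medScoreDeriv, ← abs_mul]
        exact (abs_add_le _ _).trans (add_le_add (abs_add_three _ _ _) le_rfl)
    _ ≤ _ := by gcongr

end MedScoreRegion

section Orthogonality

variable {Ω β : Type*} {mΩ : MeasurableSpace Ω} [MeasurableSpace β] {P : Measure Ω}
  {Z : Ω → β} {φ : β → ℝ} {f v : Ω → ℝ} {C : ℝ}

lemma integrable_comp_mul_sub_condExp (hZ : Measurable Z) (hφ : Measurable φ)
    (hφC : ∀ᵐ ω ∂P, |φ (Z ω)| ≤ C) (hf : Integrable f P)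
    (hv : v =ᵐ[P] P[f | MeasurableSpace.comap Z inferInstance]) :
    Integrable (fun ω => φ (Z ω) * (f ω - v ω)) P :=
  (hf.sub (integrable_condExp.congr hv.symm)).bdd_mul (hφ.comp hZ).aestronglyMeasurable hφC

lemma integral_comp_mul_sub_condExp_eq_zero [IsFiniteMeasure P] (hZ : Measurable Z)
    (hφ : Measurable φ) (hφC : ∀ᵐ ω ∂P, |φ (Z ω)| ≤ C) (hf : Integrable f P)
    (hv : v =ᵐ[P] P[f | MeasurableSpace.comap Z inferInstance]) :
    ∫ ω, φ (Z ω) * (f ω - v ω) ∂P = 0 := by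
  let m := MeasurableSpace.comap Z ‹MeasurableSpace β›
  have hm : m ≤ mΩ := hZ.comap_le
  have hφZ : StronglyMeasurable[m] (fun ω => φ (Z ω)) :=
    (hφ.comp (comap_measurable Z)).stronglyMeasurable
  have hφf : Integrable (fun ω => φ (Z ω) * f ω) P :=
    hf.bdd_mul (hφZ.mono hm).aestronglyMeasurable hφC
  have hpull : P[fun ω => φ (Z ω) * f ω | m] =ᵐ[P] fun ω => φ (Z ω) * v ω := by
    filter_upwards [condExp_mul_of_stronglyMeasurable_left hφZ hφf hf, hv] with ω h hvω
    rw [hvω]; exact h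
  have hφv : Integrable (fun ω => φ (Z ω) * v ω) P := integrable_condExp.congr hpull
  calc ∫ ω, φ (Z ω) * (f ω - v ω) ∂P
      = ∫ ω, φ (Z ω) * f ω ∂P - ∫ ω, φ (Z ω) * v ω ∂P := by
        simp only [mul_sub]; exact integral_sub hφf hφv
    _ = 0 := by rw [← integral_congr_ae hpull, integral_condExp hm, sub_self]

lemma integrable_ite_one_zero [IsFiniteMeasure P] {c : Ω → Prop} [DecidablePred c]
    (hc : MeasurableSet {ω | c ω}) : Integrable (fun ω => if c ω then (1 : ℝ) else 0) P :=
  .of_bound (Measurable.ite hc measurable_const measurable_const).aestronglyMeasurable 1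
    (ae_of_all _ fun ω => by split_ifs <;> simp)

end Orthogonality

section GateauxDerivative

variable {Ω : Type*} {mΩ : MeasurableSpace Ω} {P : Measure Ω} [IsFiniteMeasure P]
  {iD iD' y p q t s u₁ u₂ u₃ u₄ : Ω → ℝ} {ε₁ ε₂ : ℝ}

lemma integral_medScoreDeriv (hiD : Measurable iD) (hiD' : Measurable iD') (hy : Measurable y)
    (hp : Measurable p) (hq : Measurable q) (ht : Measurable t) (hs : Measurable s)
    (hu₁ : Measurable u₁) (hu₂ : Measurable u₂) (hu₃ : Measurable u₃) (hu₄ : Measurable u₄)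
    (hε₁ : 0 < ε₁) (hε₂ : 0 < ε₂)
    (hθ : ∀ᵐ ω ∂P, MedScoreRegion ε₁ ε₂ (iD ω) (iD' ω) (y ω) (p ω) (q ω) (t ω) (s ω))
    (hu₁b : ∀ᵐ ω ∂P, |u₁ ω| ≤ 1) (hu₂b : ∀ᵐ ω ∂P, |u₂ ω| ≤ 1)
    (hu₃b : ∀ᵐ ω ∂P, |u₃ ω| ≤ 1) (hu₄b : ∀ᵐ ω ∂P, |u₄ ω| ≤ 1) :
    ∫ ω, medScoreDeriv (iD ω) (iD' ω) (y ω) (p ω) (q ω) (t ω) (s ω) (u₁ ω) (u₂ ω) (u₃ ω) (u₄ ω) ∂P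
      = (∫ ω, medScoreDerivP (iD ω) (iD' ω) (y ω) (p ω) (q ω) (t ω) (s ω) * u₁ ω ∂P)
        + (∫ ω, medScoreDerivQ (iD ω) (y ω) (p ω) (q ω) (t ω) * u₂ ω ∂P)
        + (∫ ω, medScoreDerivT (iD ω) (iD' ω) (p ω) (q ω) * u₃ ω ∂P)
        + ∫ ω, medScoreDerivS (iD' ω) (p ω) * u₄ ω ∂P := by
  have hPi : Integrable (fun ω =>
      medScoreDerivP (iD ω) (iD' ω) (y ω) (p ω) (q ω) (t ω) (s ω) * u₁ ω) P :=
    (Integrable.of_bound hu₁.aestronglyMeasurable 1 hu₁b).bdd_mul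
      (Measurable.aestronglyMeasurable <| by unfold medScoreDerivP; fun_prop)
      (hθ.mono fun _ h => h.abs_medScoreDerivP_le hε₁ hε₂)
  have hQi : Integrable (fun ω => medScoreDerivQ (iD ω) (y ω) (p ω) (q ω) (t ω) * u₂ ω) P :=
    (Integrable.of_bound hu₂.aestronglyMeasurable 1 hu₂b).bdd_mul
      (Measurable.aestronglyMeasurable <| by unfold medScoreDerivQ; fun_prop)
      (hθ.mono fun _ h => h.abs_medScoreDerivQ_le hε₁ hε₂)
  have hTi : Integrable (fun ω => medScoreDerivT (iD ω) (iD' ω) (p ω) (q ω) * u₃ ω) P :=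
    (Integrable.of_bound hu₃.aestronglyMeasurable 1 hu₃b).bdd_mul
      (Measurable.aestronglyMeasurable <| by unfold medScoreDerivT; fun_prop)
      (hθ.mono fun _ h => h.abs_medScoreDerivT_le hε₁ hε₂)
  have hSi : Integrable (fun ω => medScoreDerivS (iD' ω) (p ω) * u₄ ω) P :=
    (Integrable.of_bound hu₄.aestronglyMeasurable 1 hu₄b).bdd_mul
      (Measurable.aestronglyMeasurable <| by unfold medScoreDerivS; fun_prop)
      (hθ.mono fun _ h => h.abs_medScoreDerivS_le hε₁)
  simp only [medScoreDeriv]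
  rw [integral_add (by exact (hPi.add hQi).add hTi) hSi, integral_add (by exact hPi.add hQi) hTi,
    integral_add hPi hQi]

theorem hasDerivAt_integral_medScore (hiD : Measurable iD) (hiD' : Measurable iD')
    (hy : Measurable y) (hp : Measurable p) (hq : Measurable q) (ht : Measurable t)
    (hs : Measurable s) (hu₁ : Measurable u₁) (hu₂ : Measurable u₂) (hu₃ : Measurable u₃)
    (hu₄ : Measurable u₄) (hε₁ : 0 < ε₁) (hε₂ : 0 < ε₂)
    (hiDb : ∀ᵐ ω ∂P, |iD ω| ≤ 1) (hiD'b : ∀ᵐ ω ∂P, |iD' ω| ≤ 1)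
    (hyb : ∀ᵐ ω ∂P, y ω ∈ Set.Icc (0:ℝ) 1) (hpb : ∀ᵐ ω ∂P, p ω ≤ 1 - ε₁)
    (hqb : ∀ᵐ ω ∂P, ε₂ ≤ q ω ∧ q ω ≤ 1 - ε₂) (htb : ∀ᵐ ω ∂P, t ω ∈ Set.Icc (0:ℝ) 1)
    (hsb : ∀ᵐ ω ∂P, s ω ∈ Set.Icc (0:ℝ) 1)
    (hu₁b : ∀ᵐ ω ∂P, |u₁ ω| ≤ 1) (hu₂b : ∀ᵐ ω ∂P, |u₂ ω| ≤ 1)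
    (hu₃b : ∀ᵐ ω ∂P, |u₃ ω| ≤ 1) (hu₄b : ∀ᵐ ω ∂P, |u₄ ω| ≤ 1) :
    HasDerivAt (fun r => ∫ ω, medScore (iD ω) (iD' ω) (y ω) (p ω + r * u₁ ω) (q ω + r * u₂ ω)
        (t ω + r * u₃ ω) (s ω + r * u₄ ω) ∂P)
      ((∫ ω, medScoreDerivP (iD ω) (iD' ω) (y ω) (p ω) (q ω) (t ω) (s ω) * u₁ ω ∂P)
        + (∫ ω, medScoreDerivQ (iD ω) (y ω) (p ω) (q ω) (t ω) * u₂ ω ∂P)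
        + (∫ ω, medScoreDerivT (iD ω) (iD' ω) (p ω) (q ω) * u₃ ω ∂P)
        + ∫ ω, medScoreDerivS (iD' ω) (p ω) * u₄ ω ∂P) 0 := by
  have hδ : 0 < min ε₁ ε₂ / 2 := by positivity
  have hε₁' : 0 < ε₁ / 2 := by positivity
  have hε₂' : 0 < ε₂ / 2 := by positivity
  have hregion : ∀ᵐ ω ∂P, ∀ r ∈ Metric.ball (0:ℝ) (min ε₁ ε₂ / 2),
      MedScoreRegion (ε₁ / 2) (ε₂ / 2) (iD ω) (iD' ω) (y ω) (p ω + r * u₁ ω) (q ω + r * u₂ ω)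
        (t ω + r * u₃ ω) (s ω + r * u₄ ω) := by
    filter_upwards [hiDb, hiD'b, hyb, hpb, hqb, htb, hsb, hu₁b, hu₂b, hu₃b, hu₄b]
      with ω h₁ h₂ h₃ h₄ h₅ h₆ h₇ h₈ h₉ h₁₀ h₁₁ r hr
    refine .of_segment h₁ h₂ h₃ h₄ h₅ h₆ h₇ h₈ h₉ h₁₀ h₁₁ ?_
    simpa using (Metric.mem_ball.1 hr).le
  have hregion₀ : ∀ᵐ ω ∂P,
      MedScoreRegion (ε₁ / 2) (ε₂ / 2) (iD ω) (iD' ω) (y ω) (p ω) (q ω) (t ω) (s ω) :=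
    hregion.mono fun ω h => by simpa using h 0 (Metric.mem_ball_self hδ)
  rw [← integral_medScoreDeriv hiD hiD' hy hp hq ht hs hu₁ hu₂ hu₃ hu₄ hε₁' hε₂' hregion₀
    hu₁b hu₂b hu₃b hu₄b]
  have key := hasDerivAt_integral_of_dominated_loc_of_deriv_le (μ := P) (x₀ := 0)
    (F := fun r ω => medScore (iD ω) (iD' ω) (y ω) (p ω + r * u₁ ω) (q ω + r * u₂ ω)
        (t ω + r * u₃ ω) (s ω + r * u₄ ω))
    (F' := fun r ω => medScoreDeriv (iD ω) (iD' ω) (y ω) (p ω + r * u₁ ω) (q ω + r * u₂ ω)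
        (t ω + r * u₃ ω) (s ω + r * u₄ ω) (u₁ ω) (u₂ ω) (u₃ ω) (u₄ ω))
    (Metric.ball_mem_nhds 0 hδ) (.of_forall fun r => by unfold medScore; fun_prop)
    (Integrable.of_bound (by unfold medScore; fun_prop) _ (by
      filter_upwards [hregion₀, hsb] with ω h hs
      simpa using h.abs_medScore_le hε₁' hε₂' (abs_le.2 ⟨by linarith [hs.1], hs.2⟩)))
    (Measurable.aestronglyMeasurable <| by
      unfold medScoreDeriv medScoreDerivP medScoreDerivQ medScoreDerivT medScoreDerivS
      fun_prop)
    (by filter_upwards [hregion, hu₁b, hu₂b, hu₃b, hu₄b] with ω h h₁ h₂ h₃ h₄ r hr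
        exact (h r hr).abs_medScoreDeriv_le hε₁' hε₂' h₁ h₂ h₃ h₄)
    (integrable_const _)
    (by filter_upwards [hregion] with ω h r hr
        exact HasDerivAt.medScore (iD ω) (iD' ω) (y ω) (r := r)
          ((hasDerivAt_mul_const (u₁ ω)).const_add (p ω))
          ((hasDerivAt_mul_const (u₂ ω)).const_add (q ω))
          ((hasDerivAt_mul_const (u₃ ω)).const_add (t ω))
          ((hasDerivAt_mul_const (u₄ ω)).const_add (s ω))
          (by linarith [(h r hr).le_one_sub_p]) (by linarith [(h r hr).le_q]))
  simpa using key.2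

end GateauxDerivative

lemma abs_ite_one_zero_le {c : Prop} [Decidable c] : |(if c then (1 : ℝ) else 0)| ≤ 1 := by
  split_ifs <;> simp

section Mediation

variable {Ω 𝓜 𝓧 : Type*} {mΩ : MeasurableSpace Ω} [MeasurableSpace 𝓜] [MeasurableSpace 𝓧]
  {P : Measure Ω} [IsFiniteMeasure P] {Y : Ω → ℝ} {D : Ω → ℕ} {M : Ω → 𝓜} {X : Ω → 𝓧}
  {a ε₁ ε₂ C W : ℝ} {d d' : ℕ} {g₁ : 𝓧 → ℝ} {g₂ : 𝓜 → 𝓧 → ℝ} {g₃ : ℕ → 𝓜 → 𝓧 → ℝ}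
  {g₄ : ℕ → 𝓧 → ℝ}

lemma outcomeResidual_integrable_and_integral_eq_zero (hY : Measurable Y) (hD : Measurable D)
    (hM : Measurable M) (hX : Measurable X)
    (hg₃ver : (fun ω => g₃ (D ω) (M ω) (X ω)) =ᵐ[P]
      P[(fun ω' => if Y ω' ≤ a then (1:ℝ) else 0) |
        MeasurableSpace.comap (fun ω' => (D ω', M ω', X ω')) inferInstance])
    {c : 𝓜 → 𝓧 → ℝ} (hc : Measurable (fun z : 𝓜 × 𝓧 => c z.1 z.2))
    (hcC : ∀ᵐ ω ∂P, |c (M ω) (X ω)| ≤ C) :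
    Integrable (fun ω => (if D ω = d then (1:ℝ) else 0) * c (M ω) (X ω)
      * ((if Y ω ≤ a then (1:ℝ) else 0) - g₃ d (M ω) (X ω))) P ∧
    ∫ ω, (if D ω = d then (1:ℝ) else 0) * c (M ω) (X ω)
      * ((if Y ω ≤ a then (1:ℝ) else 0) - g₃ d (M ω) (X ω)) ∂P = 0 := by
  have hφ : Measurable fun z : ℕ × 𝓜 × 𝓧 => (if z.1 = d then (1:ℝ) else 0) * c z.2.1 z.2.2 :=
    (Measurable.ite (measurable_fst (measurableSet_singleton d)) measurable_const
      measurable_const).mul (hc.comp measurable_snd)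
  have hφC : ∀ᵐ ω ∂P, |(if D ω = d then (1:ℝ) else 0) * c (M ω) (X ω)| ≤ C :=
    hcC.mono fun ω h => by
      rw [abs_mul]; exact (mul_le_of_le_one_left (abs_nonneg _) abs_ite_one_zero_le).trans h
  have hYa := integrable_ite_one_zero (P := P) (c := fun ω => Y ω ≤ a) (hY measurableSet_Iic)
  have hDMX := hD.prodMk (hM.prodMk hX)
  have heq : (fun ω => (if D ω = d then (1:ℝ) else 0) * c (M ω) (X ω)
        * ((if Y ω ≤ a then (1:ℝ) else 0) - g₃ d (M ω) (X ω)))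
      = fun ω => (if D ω = d then (1:ℝ) else 0) * c (M ω) (X ω)
        * ((if Y ω ≤ a then (1:ℝ) else 0) - g₃ (D ω) (M ω) (X ω)) := by
    funext ω
    by_cases h : D ω = d <;> simp [h]
  rw [heq]
  exact ⟨integrable_comp_mul_sub_condExp hDMX hφ hφC hYa hg₃ver,
    integral_comp_mul_sub_condExp_eq_zero hDMX hφ hφC hYa hg₃ver⟩

lemma nestedResidual_integrable_and_integral_eq_zero (hD : Measurable D) (hM : Measurable M)
    (hX : Measurable X) (hg₃ : Measurable (fun z : ℕ × 𝓜 × 𝓧 => g₃ z.1 z.2.1 z.2.2))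
    (hg₃band : ∀ m x, g₃ d m x ∈ Set.Icc (0:ℝ) 1)
    (hg₄ver : (fun ω => g₄ (D ω) (X ω)) =ᵐ[P]
      P[(fun ω' => g₃ d (M ω') (X ω')) |
        MeasurableSpace.comap (fun ω' => (D ω', X ω')) inferInstance])
    {c : 𝓧 → ℝ} (hc : Measurable c) (hcC : ∀ᵐ ω ∂P, |c (X ω)| ≤ C) :
    Integrable (fun ω => (if D ω = d' then (1:ℝ) else 0) * c (X ω)
      * (g₃ d (M ω) (X ω) - g₄ d' (X ω))) P ∧
    ∫ ω, (if D ω = d' then (1:ℝ) else 0) * c (X ω) * (g₃ d (M ω) (X ω) - g₄ d' (X ω)) ∂P = 0 := by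
  have hφ : Measurable fun z : ℕ × 𝓧 => (if z.1 = d' then (1:ℝ) else 0) * c z.2 :=
    (Measurable.ite (measurable_fst (measurableSet_singleton d')) measurable_const
      measurable_const).mul (hc.comp measurable_snd)
  have hφC : ∀ᵐ ω ∂P, |(if D ω = d' then (1:ℝ) else 0) * c (X ω)| ≤ C :=
    hcC.mono fun ω h => by
      rw [abs_mul]; exact (mul_le_of_le_one_left (abs_nonneg _) abs_ite_one_zero_le).trans h
  have hg₃d : Integrable (fun ω => g₃ d (M ω) (X ω)) P :=
    .of_bound (hg₃.comp (measurable_const.prodMk (hM.prodMk hX))).aestronglyMeasurable 1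
      (ae_of_all _ fun ω => abs_le.2 ⟨by linarith [(hg₃band (M ω) (X ω)).1],
        (hg₃band (M ω) (X ω)).2⟩)
  have hDX := hD.prodMk hX
  have heq : (fun ω => (if D ω = d' then (1:ℝ) else 0) * c (X ω)
        * (g₃ d (M ω) (X ω) - g₄ d' (X ω)))
      = fun ω => (if D ω = d' then (1:ℝ) else 0) * c (X ω)
        * (g₃ d (M ω) (X ω) - g₄ (D ω) (X ω)) := by
    funext ω
    by_cases h : D ω = d' <;> simp [h]
  rw [heq]
  exact ⟨integrable_comp_mul_sub_condExp hDX hφ hφC hg₃d hg₄ver,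
    integral_comp_mul_sub_condExp_eq_zero hDX hφ hφC hg₃d hg₄ver⟩

lemma integral_medScoreDerivP_mul_eq_zero (hY : Measurable Y) (hD : Measurable D)
    (hM : Measurable M) (hX : Measurable X) (hε₁ : 0 < ε₁) (hε₂ : 0 < ε₂)
    (hg₁ : Measurable g₁) (hg₂ : Measurable (fun z : 𝓜 × 𝓧 => g₂ z.1 z.2))
    (hg₃ : Measurable (fun z : ℕ × 𝓜 × 𝓧 => g₃ z.1 z.2.1 z.2.2))
    (hg₃ver : (fun ω => g₃ (D ω) (M ω) (X ω)) =ᵐ[P]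
      P[(fun ω' => if Y ω' ≤ a then (1:ℝ) else 0) |
        MeasurableSpace.comap (fun ω' => (D ω', M ω', X ω')) inferInstance])
    (hg₄ver : (fun ω => g₄ (D ω) (X ω)) =ᵐ[P]
      P[(fun ω' => g₃ d (M ω') (X ω')) |
        MeasurableSpace.comap (fun ω' => (D ω', X ω')) inferInstance])
    (hg₁band : ∀ᵐ ω ∂P, g₁ (X ω) ≤ 1 - ε₁)
    (hg₂band : ∀ᵐ ω ∂P, ε₂ ≤ g₂ (M ω) (X ω) ∧ g₂ (M ω) (X ω) ≤ 1 - ε₂)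
    (hg₃band : ∀ m x, g₃ d m x ∈ Set.Icc (0:ℝ) 1)
    {w : 𝓧 → ℝ} (hw : Measurable w) (hwW : ∀ᵐ ω ∂P, |w (X ω)| ≤ W) :
    ∫ ω, medScoreDerivP (if D ω = d then 1 else 0) (if D ω = d' then 1 else 0)
      (if Y ω ≤ a then 1 else 0) (g₁ (X ω)) (g₂ (M ω) (X ω)) (g₃ d (M ω) (X ω)) (g₄ d' (X ω))
      * w (X ω) ∂P = 0 := by
  have hp : ∀ᵐ ω ∂P, ε₁ ≤ |1 - g₁ (X ω)| :=
    hg₁band.mono fun ω hp => (by linarith : ε₁ ≤ 1 - g₁ (X ω)).trans (le_abs_self _)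
  have hA := outcomeResidual_integrable_and_integral_eq_zero (d := d) hY hD hM hX hg₃ver
    (c := fun m x => (1 - g₂ m x) / ((1 - g₁ x) ^ 2 * g₂ m x) * w x)
    (((measurable_const.sub hg₂).div (((measurable_const.sub hg₁).comp measurable_snd).pow_const
      2 |>.mul hg₂)).mul (hw.comp measurable_snd)) (C := 1 / (ε₁ ^ 2 * ε₂) * W) (by
        filter_upwards [hp, hg₂band, hwW] with ω hp hq hw
        have hq' : ε₂ ≤ |g₂ (M ω) (X ω)| := hq.1.trans (le_abs_self _)
        have h1q : |1 - g₂ (M ω) (X ω)| ≤ 1 := abs_le.2 ⟨by linarith, by linarith⟩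
        simp only [abs_mul, abs_div, abs_pow]
        gcongr)
  have hB := nestedResidual_integrable_and_integral_eq_zero (d' := d') hD hM hX hg₃ hg₃band
    hg₄ver (c := fun x => w x / (1 - g₁ x) ^ 2) (hw.div ((measurable_const.sub hg₁).pow_const 2))
    (C := W / ε₁ ^ 2) (by
      filter_upwards [hp, hwW] with ω hp hw
      simp only [abs_div, abs_pow]
      gcongr
      exact (abs_nonneg _).trans hw)
  refine (integral_congr_ae (ae_of_all _ fun ω => ?_)).trans ((integral_add hA.1 hB.1).trans ?_)
  · simp only [medScoreDerivP]
    ring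
  · rw [hA.2, hB.2, add_zero]

lemma integral_medScoreDerivQ_mul_eq_zero (hY : Measurable Y) (hD : Measurable D)
    (hM : Measurable M) (hX : Measurable X) (hε₁ : 0 < ε₁) (hε₂ : 0 < ε₂)
    (hg₁ : Measurable g₁) (hg₂ : Measurable (fun z : 𝓜 × 𝓧 => g₂ z.1 z.2))
    (hg₃ver : (fun ω => g₃ (D ω) (M ω) (X ω)) =ᵐ[P]
      P[(fun ω' => if Y ω' ≤ a then (1:ℝ) else 0) |
        MeasurableSpace.comap (fun ω' => (D ω', M ω', X ω')) inferInstance])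
    (hg₁band : ∀ᵐ ω ∂P, g₁ (X ω) ≤ 1 - ε₁) (hg₂band : ∀ᵐ ω ∂P, ε₂ ≤ g₂ (M ω) (X ω))
    {w : 𝓜 → 𝓧 → ℝ} (hw : Measurable (fun z : 𝓜 × 𝓧 => w z.1 z.2))
    (hwW : ∀ᵐ ω ∂P, |w (M ω) (X ω)| ≤ W) :
    ∫ ω, medScoreDerivQ (if D ω = d then 1 else 0) (if Y ω ≤ a then 1 else 0) (g₁ (X ω))
      (g₂ (M ω) (X ω)) (g₃ d (M ω) (X ω)) * w (M ω) (X ω) ∂P = 0 := by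
  have hA := outcomeResidual_integrable_and_integral_eq_zero (d := d) hY hD hM hX hg₃ver
    (c := fun m x => -(w m x / ((1 - g₁ x) * g₂ m x ^ 2)))
    (hw.div (((measurable_const.sub hg₁).comp measurable_snd).mul (hg₂.pow_const 2))).neg
    (C := W / (ε₁ * ε₂ ^ 2)) (by
      filter_upwards [hg₁band, hg₂band, hwW] with ω hp hq hw
      have hp' : ε₁ ≤ |1 - g₁ (X ω)| := (by linarith : ε₁ ≤ 1 - g₁ (X ω)).trans (le_abs_self _)
      have hq' : ε₂ ≤ |g₂ (M ω) (X ω)| := hq.trans (le_abs_self _)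
      simp only [abs_neg, abs_mul, abs_div, abs_pow]
      gcongr
      exact (abs_nonneg _).trans hw)
  refine (integral_congr_ae (ae_of_all _ fun ω => ?_)).trans hA.2
  simp only [medScoreDerivQ]
  ring

lemma integral_medScoreDerivT_mul_eq_zero (hD : Measurable D) (hM : Measurable M)
    (hX : Measurable X) (hDd : ∀ ω, D ω = d ∨ D ω = d') (hdd' : d ≠ d') (hε₁ : 0 < ε₁)
    (hε₂ : 0 < ε₂) (hg₁ : Measurable g₁) (hg₂ : Measurable (fun z : 𝓜 × 𝓧 => g₂ z.1 z.2))
    (hg₂ver : (fun ω => g₂ (M ω) (X ω)) =ᵐ[P]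
      P[(fun ω' => if D ω' = d then (1:ℝ) else 0) |
        MeasurableSpace.comap (fun ω' => (M ω', X ω')) inferInstance])
    (hg₁band : ∀ᵐ ω ∂P, g₁ (X ω) ≤ 1 - ε₁) (hg₂band : ∀ᵐ ω ∂P, ε₂ ≤ g₂ (M ω) (X ω))
    {w : 𝓜 → 𝓧 → ℝ} (hw : Measurable (fun z : 𝓜 × 𝓧 => w z.1 z.2))
    (hwW : ∀ᵐ ω ∂P, |w (M ω) (X ω)| ≤ W) :
    ∫ ω, medScoreDerivT (if D ω = d then 1 else 0) (if D ω = d' then 1 else 0) (g₁ (X ω))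
      (g₂ (M ω) (X ω)) * w (M ω) (X ω) ∂P = 0 := by
  have hφ : ∀ᵐ ω ∂P, |-(w (M ω) (X ω) / ((1 - g₁ (X ω)) * g₂ (M ω) (X ω)))|
      ≤ W / (ε₁ * ε₂) := by
    filter_upwards [hg₁band, hg₂band, hwW] with ω hp hq hw
    have hp' : ε₁ ≤ |1 - g₁ (X ω)| := (by linarith : ε₁ ≤ 1 - g₁ (X ω)).trans (le_abs_self _)
    have hq' : ε₂ ≤ |g₂ (M ω) (X ω)| := hq.trans (le_abs_self _)
    rw [abs_neg, abs_div, abs_mul]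
    gcongr
    exact (abs_nonneg _).trans hw
  refine (integral_congr_ae ?_).trans (integral_comp_mul_sub_condExp_eq_zero
    (Z := fun ω => (M ω, X ω)) (φ := fun z => -(w z.1 z.2 / ((1 - g₁ z.2) * g₂ z.1 z.2)))
    (hM.prodMk hX)
    (hw.div (((measurable_const.sub hg₁).comp measurable_snd).mul hg₂)).neg hφ
    (integrable_ite_one_zero (c := fun ω => D ω = d) (hD (measurableSet_singleton d))) hg₂ver)
  filter_upwards [hg₁band, hg₂band] with ω hp hq
  have hp0 : 1 - g₁ (X ω) ≠ 0 := by linarith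
  have hq0 : g₂ (M ω) (X ω) ≠ 0 := by linarith
  rcases hDd ω with h | h <;> simp only [h, medScoreDerivT, hdd', hdd'.symm, if_true, if_false]
  all_goals field_simp; ring

lemma integral_medScoreDerivS_mul_eq_zero (hD : Measurable D) (hX : Measurable X)
    (hDd : ∀ ω, D ω = d ∨ D ω = d') (hdd' : d ≠ d') (hε₁ : 0 < ε₁) (hg₁ : Measurable g₁)
    (hg₁ver : (fun ω => g₁ (X ω)) =ᵐ[P]
      P[(fun ω' => if D ω' = d then (1:ℝ) else 0) | MeasurableSpace.comap X inferInstance])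
    (hg₁band : ∀ᵐ ω ∂P, g₁ (X ω) ≤ 1 - ε₁)
    {w : 𝓧 → ℝ} (hw : Measurable w) (hwW : ∀ᵐ ω ∂P, |w (X ω)| ≤ W) :
    ∫ ω, medScoreDerivS (if D ω = d' then 1 else 0) (g₁ (X ω)) * w (X ω) ∂P = 0 := by
  have hφ : ∀ᵐ ω ∂P, |w (X ω) / (1 - g₁ (X ω))| ≤ W / ε₁ := by
    filter_upwards [hg₁band, hwW] with ω hp hw
    have hp' : ε₁ ≤ |1 - g₁ (X ω)| := (by linarith : ε₁ ≤ 1 - g₁ (X ω)).trans (le_abs_self _)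
    rw [abs_div]
    gcongr
    exact (abs_nonneg _).trans hw
  refine (integral_congr_ae ?_).trans (integral_comp_mul_sub_condExp_eq_zero
    (φ := fun x => w x / (1 - g₁ x)) hX (hw.div (measurable_const.sub hg₁)) hφ
    (integrable_ite_one_zero (c := fun ω => D ω = d) (hD (measurableSet_singleton d))) hg₁ver)
  filter_upwards [hg₁band] with ω hp
  have hp0 : 1 - g₁ (X ω) ≠ 0 := by linarith
  rcases hDd ω with h | h <;> simp only [h, medScoreDerivS, hdd', hdd'.symm, if_true, if_false]
  all_goals field_simp; ring

lemma hasDerivAt_integral_medScore_segment (hY : Measurable Y) (hD : Measurable D)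
    (hM : Measurable M) (hX : Measurable X) (hε₁ : 0 < ε₁) (hε₂ : 0 < ε₂)
    (hg₁ : Measurable g₁) (hg₂ : Measurable (fun z : 𝓜 × 𝓧 => g₂ z.1 z.2))
    (hg₃ : Measurable (fun z : ℕ × 𝓜 × 𝓧 => g₃ z.1 z.2.1 z.2.2))
    (hg₄ : Measurable (fun z : ℕ × 𝓧 => g₄ z.1 z.2))
    (hg₁band : ∀ᵐ ω ∂P, g₁ (X ω) ≤ 1 - ε₁)
    (hg₂band : ∀ᵐ ω ∂P, ε₂ ≤ g₂ (M ω) (X ω) ∧ g₂ (M ω) (X ω) ≤ 1 - ε₂)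
    (hg₃band : ∀ m x, g₃ d m x ∈ Set.Icc (0:ℝ) 1) (hg₄band : ∀ x, g₄ d' x ∈ Set.Icc (0:ℝ) 1)
    {h₁ : 𝓧 → ℝ} {h₂ h₃ : 𝓜 → 𝓧 → ℝ} {h₄ : 𝓧 → ℝ} (hh₁ : Measurable h₁)
    (hh₂ : Measurable (fun z : 𝓜 × 𝓧 => h₂ z.1 z.2))
    (hh₃ : Measurable (fun z : 𝓜 × 𝓧 => h₃ z.1 z.2)) (hh₄ : Measurable h₄)
    (hu₁ : ∀ᵐ ω ∂P, |h₁ (X ω) - g₁ (X ω)| ≤ 1)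
    (hu₂ : ∀ᵐ ω ∂P, |h₂ (M ω) (X ω) - g₂ (M ω) (X ω)| ≤ 1)
    (hu₃ : ∀ᵐ ω ∂P, |h₃ (M ω) (X ω) - g₃ d (M ω) (X ω)| ≤ 1)
    (hu₄ : ∀ᵐ ω ∂P, |h₄ (X ω) - g₄ d' (X ω)| ≤ 1) :
    HasDerivAt (fun r => ∫ ω, medScore (if D ω = d then 1 else 0) (if D ω = d' then 1 else 0)
        (if Y ω ≤ a then 1 else 0) (g₁ (X ω) + r * (h₁ (X ω) - g₁ (X ω)))
        (g₂ (M ω) (X ω) + r * (h₂ (M ω) (X ω) - g₂ (M ω) (X ω)))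
        (g₃ d (M ω) (X ω) + r * (h₃ (M ω) (X ω) - g₃ d (M ω) (X ω)))
        (g₄ d' (X ω) + r * (h₄ (X ω) - g₄ d' (X ω))) ∂P)
      ((∫ ω, medScoreDerivP (if D ω = d then 1 else 0) (if D ω = d' then 1 else 0)
          (if Y ω ≤ a then 1 else 0) (g₁ (X ω)) (g₂ (M ω) (X ω)) (g₃ d (M ω) (X ω))
          (g₄ d' (X ω)) * (h₁ (X ω) - g₁ (X ω)) ∂P)
        + (∫ ω, medScoreDerivQ (if D ω = d then 1 else 0) (if Y ω ≤ a then 1 else 0)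
          (g₁ (X ω)) (g₂ (M ω) (X ω)) (g₃ d (M ω) (X ω)) * (h₂ (M ω) (X ω) - g₂ (M ω) (X ω)) ∂P)
        + (∫ ω, medScoreDerivT (if D ω = d then 1 else 0) (if D ω = d' then 1 else 0)
          (g₁ (X ω)) (g₂ (M ω) (X ω)) * (h₃ (M ω) (X ω) - g₃ d (M ω) (X ω)) ∂P)
        + ∫ ω, medScoreDerivS (if D ω = d' then 1 else 0) (g₁ (X ω))
          * (h₄ (X ω) - g₄ d' (X ω)) ∂P) 0 := by
  have hMX := hM.prodMk hX
  have hIdm : ∀ δ, Measurable fun ω => if D ω = δ then (1 : ℝ) else 0 := fun δ =>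
    Measurable.ite (hD (measurableSet_singleton δ)) measurable_const measurable_const
  have hg₃d := hg₃.comp ((measurable_const (a := d)).prodMk hMX)
  have hg₄d' := hg₄.comp ((measurable_const (a := d')).prodMk hX)
  exact hasDerivAt_integral_medScore (hIdm d) (hIdm d')
    (Measurable.ite (hY measurableSet_Iic) measurable_const measurable_const) (hg₁.comp hX)
    (hg₂.comp hMX) hg₃d hg₄d' ((hh₁.comp hX).sub (hg₁.comp hX))
    ((hh₂.comp hMX).sub (hg₂.comp hMX)) ((hh₃.comp hMX).sub hg₃d) ((hh₄.comp hX).sub hg₄d')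
    hε₁ hε₂ (ae_of_all _ fun _ => abs_ite_one_zero_le) (ae_of_all _ fun _ => abs_ite_one_zero_le)
    (ae_of_all _ fun _ => by split_ifs <;> simp) hg₁band hg₂band
    (ae_of_all _ fun _ => hg₃band _ _) (ae_of_all _ fun _ => hg₄band _) hu₁ hu₂ hu₃ hu₄

end Mediation

theorem statement_11_general
    {Ω 𝓜 𝓧 : Type*} [MeasurableSpace Ω]
    [MeasurableSpace 𝓜] [MeasurableSpace 𝓧]
    (P : Measure Ω) [IsProbabilityMeasure P]
    (Y : Ω → ℝ) (D : Ω → ℕ) (M : Ω → 𝓜) (X : Ω → 𝓧)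
    (hY : Measurable Y) (hD : Measurable D) (hM : Measurable M) (hX : Measurable X)
    (hD01 : ∀ ω, D ω ≤ 1)
    (a : ℝ) (d d' : ℕ) (hd : d ≤ 1) (hd'def : d' = 1 - d)
    (ε₁ ε₂ : ℝ) (hε₁ : ε₁ ∈ Set.Ioo (0:ℝ) (1/2)) (hε₂ : ε₂ ∈ Set.Ioo (0:ℝ) (1/2))
    -- true nuisance parameters
    (g₁ : 𝓧 → ℝ) (g₂ : 𝓜 → 𝓧 → ℝ) (g₃ : ℕ → 𝓜 → 𝓧 → ℝ) (g₄ : ℕ → 𝓧 → ℝ)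
    (hg₁meas : Measurable g₁)
    (hg₂meas : Measurable (fun t : 𝓜 × 𝓧 => g₂ t.1 t.2))
    (hg₃meas : Measurable (fun t : ℕ × 𝓜 × 𝓧 => g₃ t.1 t.2.1 t.2.2))
    (hg₄meas : Measurable (fun t : ℕ × 𝓧 => g₄ t.1 t.2))
    -- g₁⁰(X) = P(D = d | X)
    (hg₁ver : (fun ω => g₁ (X ω)) =ᵐ[P]
      P[(fun ω' => if D ω' = d then (1:ℝ) else 0) | MeasurableSpace.comap X inferInstance])
    -- g₂⁰(M,X) = P(D = d | M, X)
    (hg₂ver : (fun ω => g₂ (M ω) (X ω)) =ᵐ[P]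
      P[(fun ω' => if D ω' = d then (1:ℝ) else 0) |
        MeasurableSpace.comap (fun ω' => (M ω', X ω')) inferInstance])
    -- g₃⁰(D,M,X) = P(Y ≤ a | D, M, X)
    (hg₃ver : (fun ω => g₃ (D ω) (M ω) (X ω)) =ᵐ[P]
      P[(fun ω' => if Y ω' ≤ a then (1:ℝ) else 0) |
        MeasurableSpace.comap (fun ω' => (D ω', M ω', X ω')) inferInstance])
    -- g₄⁰(D,X) = E[g₃⁰(d, M, X) | D, X]
    (hg₄ver : (fun ω => g₄ (D ω) (X ω)) =ᵐ[P]
      P[(fun ω' => g₃ d (M ω') (X ω')) |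
        MeasurableSpace.comap (fun ω' => (D ω', X ω')) inferInstance])
    -- overlap bands for the truth
    (hg₁band : ∀ᵐ ω ∂P, ε₁ ≤ g₁ (X ω) ∧ g₁ (X ω) ≤ 1 - ε₁)
    (hg₂band : ∀ᵐ ω ∂P, ε₂ ≤ g₂ (M ω) (X ω) ∧ g₂ (M ω) (X ω) ≤ 1 - ε₂)
    (hg₃band : ∀ δ m x, g₃ δ m x ∈ Set.Icc (0:ℝ) 1)
    (hg₄band : ∀ δ x, g₄ δ x ∈ Set.Icc (0:ℝ) 1)
    -- bounded measurable perturbations staying in the overlap bands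
    (h₁ : 𝓧 → ℝ) (h₂ : 𝓜 → 𝓧 → ℝ) (h₃ : 𝓜 → 𝓧 → ℝ) (h₄ : 𝓧 → ℝ)
    (hh₁meas : Measurable h₁)
    (hh₂meas : Measurable (fun t : 𝓜 × 𝓧 => h₂ t.1 t.2))
    (hh₃meas : Measurable (fun t : 𝓜 × 𝓧 => h₃ t.1 t.2))
    (hh₄meas : Measurable h₄)
    (hh₁band : ∀ x, h₁ x ∈ Set.Icc ε₁ (1 - ε₁))
    (hh₂band : ∀ m x, h₂ m x ∈ Set.Icc ε₂ (1 - ε₂))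
    (hh₃band : ∀ m x, h₃ m x ∈ Set.Icc (0:ℝ) 1)
    (hh₄band : ∀ x, h₄ x ∈ Set.Icc (0:ℝ) 1) :
    -- the Gateaux derivative of the mean score at the truth vanishes
    HasDerivAt (fun r : ℝ =>
      ∫ ω,
        ((if D ω = d then (1:ℝ) else 0)
            * ((1 - (g₂ (M ω) (X ω) + r * (h₂ (M ω) (X ω) - g₂ (M ω) (X ω))))
                / ((1 - (g₁ (X ω) + r * (h₁ (X ω) - g₁ (X ω))))
                    * (g₂ (M ω) (X ω) + r * (h₂ (M ω) (X ω) - g₂ (M ω) (X ω)))))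
            * ((if Y ω ≤ a then (1:ℝ) else 0)
                - (g₃ d (M ω) (X ω) + r * (h₃ (M ω) (X ω) - g₃ d (M ω) (X ω))))
          + (if D ω = d' then (1:ℝ) else 0)
              / (1 - (g₁ (X ω) + r * (h₁ (X ω) - g₁ (X ω))))
            * ((g₃ d (M ω) (X ω) + r * (h₃ (M ω) (X ω) - g₃ d (M ω) (X ω)))
                - (g₄ d' (X ω) + r * (h₄ (X ω) - g₄ d' (X ω))))
          + (g₄ d' (X ω) + r * (h₄ (X ω) - g₄ d' (X ω)))) ∂P) 0 0
    ∧
    -- each directional derivative expectation is zero: direction t₁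
    (∫ ω,
        ((if D ω = d then (1:ℝ) else 0) * (1 - g₂ (M ω) (X ω))
            / ((1 - g₁ (X ω)) ^ 2 * g₂ (M ω) (X ω))
            * ((if Y ω ≤ a then (1:ℝ) else 0) - g₃ d (M ω) (X ω))
          + (if D ω = d' then (1:ℝ) else 0) / (1 - g₁ (X ω)) ^ 2
            * (g₃ d (M ω) (X ω) - g₄ d' (X ω)))
        * (h₁ (X ω) - g₁ (X ω)) ∂P = 0)
    ∧
    -- direction t₂
    (∫ ω,
        (-((if D ω = d then (1:ℝ) else 0)
            / ((1 - g₁ (X ω)) * g₂ (M ω) (X ω) ^ 2))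
            * ((if Y ω ≤ a then (1:ℝ) else 0) - g₃ d (M ω) (X ω)))
        * (h₂ (M ω) (X ω) - g₂ (M ω) (X ω)) ∂P = 0)
    ∧
    -- direction t₃
    (∫ ω,
        ((if D ω = d' then (1:ℝ) else 0) / (1 - g₁ (X ω))
          - (if D ω = d then (1:ℝ) else 0) * (1 - g₂ (M ω) (X ω))
              / ((1 - g₁ (X ω)) * g₂ (M ω) (X ω)))
        * (h₃ (M ω) (X ω) - g₃ d (M ω) (X ω)) ∂P = 0)
    ∧
    -- direction t₄
    (∫ ω,
        (1 - (if D ω = d' then (1:ℝ) else 0) / (1 - g₁ (X ω)))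
        * (h₄ (X ω) - g₄ d' (X ω)) ∂P = 0) := by
  obtain ⟨hε₁, -⟩ := hε₁
  obtain ⟨hε₂, -⟩ := hε₂
  have hdd' : d ≠ d' := by omega
  have hDd : ∀ ω, D ω = d ∨ D ω = d' := fun ω => by have := hD01 ω; omega
  have hg₁le : ∀ᵐ ω ∂P, g₁ (X ω) ≤ 1 - ε₁ := hg₁band.mono fun _ h => h.2
  have hg₂ge : ∀ᵐ ω ∂P, ε₂ ≤ g₂ (M ω) (X ω) := hg₂band.mono fun _ h => h.1
  have hu₁ : ∀ᵐ ω ∂P, |h₁ (X ω) - g₁ (X ω)| ≤ 1 := hg₁band.mono fun ω hg =>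
    abs_sub_le_iff.2 ⟨by linarith [(hh₁band (X ω)).2], by linarith [(hh₁band (X ω)).1]⟩
  have hu₂ : ∀ᵐ ω ∂P, |h₂ (M ω) (X ω) - g₂ (M ω) (X ω)| ≤ 1 := hg₂band.mono fun ω hg =>
    abs_sub_le_iff.2 ⟨by linarith [(hh₂band (M ω) (X ω)).2], by linarith [(hh₂band (M ω) (X ω)).1]⟩
  have hu₃ : ∀ᵐ ω ∂P, |h₃ (M ω) (X ω) - g₃ d (M ω) (X ω)| ≤ 1 := ae_of_all _ fun ω =>
    abs_sub_le_of_nonneg_of_le (hh₃band _ _).1 (hh₃band _ _).2 (hg₃band _ _ _).1 (hg₃band _ _ _).2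
  have hu₄ : ∀ᵐ ω ∂P, |h₄ (X ω) - g₄ d' (X ω)| ≤ 1 := ae_of_all _ fun ω =>
    abs_sub_le_of_nonneg_of_le (hh₄band _).1 (hh₄band _).2 (hg₄band _ _).1 (hg₄band _ _).2
  have hP := integral_medScoreDerivP_mul_eq_zero (d' := d') hY hD hM hX hε₁ hε₂ hg₁meas hg₂meas
    hg₃meas hg₃ver hg₄ver hg₁le hg₂band (hg₃band d) (w := fun x => h₁ x - g₁ x)
    (hh₁meas.sub hg₁meas) hu₁
  have hQ := integral_medScoreDerivQ_mul_eq_zero (d := d) hY hD hM hX hε₁ hε₂ hg₁meas hg₂meas hg₃ver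
    hg₁le hg₂ge (w := fun m x => h₂ m x - g₂ m x) (hh₂meas.sub hg₂meas) hu₂
  have hT := integral_medScoreDerivT_mul_eq_zero hD hM hX hDd hdd' hε₁ hε₂ hg₁meas hg₂meas
    hg₂ver hg₁le hg₂ge (w := fun m x => h₃ m x - g₃ d m x)
    (hh₃meas.sub (hg₃meas.comp (measurable_const.prodMk measurable_id))) hu₃
  have hS := integral_medScoreDerivS_mul_eq_zero hD hX hDd hdd' hε₁ hg₁meas hg₁ver hg₁le
    (w := fun x => h₄ x - g₄ d' x)
    (hh₄meas.sub (hg₄meas.comp (measurable_const.prodMk measurable_id))) hu₄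
  have hderiv := hasDerivAt_integral_medScore_segment (a := a) hY hD hM hX hε₁ hε₂ hg₁meas
    hg₂meas hg₃meas hg₄meas hg₁le hg₂band (hg₃band d) (hg₄band d') hh₁meas hh₂meas hh₃meas
    hh₄meas hu₁ hu₂ hu₃ hu₄
  rw [hP, hQ, hT, hS, add_zero, add_zero, add_zero] at hderiv
  exact ⟨hderiv, hP, hQ, hT, hS⟩

/-- Exact Neyman orthogonality of the efficient score (case `d ≠ d'`). The
Gateaux derivative at `r = 0` of `r ↦ E[μ_{d,d',a}(t⁰ + r(h − t⁰))]` vanishes; equivalently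
each of the four directional derivative expectations is zero. -/
theorem statement_11
    {Ω 𝓜 𝓧 : Type*} [MeasurableSpace Ω]
    [MeasurableSpace 𝓜] [Countable 𝓜] [MeasurableSingletonClass 𝓜] [MeasurableSpace 𝓧]
    (P : Measure Ω) [IsProbabilityMeasure P]
    (Y : Ω → ℝ) (D : Ω → ℕ) (M : Ω → 𝓜) (X : Ω → 𝓧)
    (hY : Measurable Y) (hD : Measurable D) (hM : Measurable M) (hX : Measurable X)
    (hD01 : ∀ ω, D ω ≤ 1)
    (a : ℝ) (d d' : ℕ) (hd : d ≤ 1) (hd'def : d' = 1 - d)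
    (ε₁ ε₂ : ℝ) (hε₁ : ε₁ ∈ Set.Ioo (0:ℝ) (1/2)) (hε₂ : ε₂ ∈ Set.Ioo (0:ℝ) (1/2))
    -- true nuisance parameters
    (g₁ : 𝓧 → ℝ) (g₂ : 𝓜 → 𝓧 → ℝ) (g₃ : ℕ → 𝓜 → 𝓧 → ℝ) (g₄ : ℕ → 𝓧 → ℝ)
    (hg₁meas : Measurable g₁)
    (hg₂meas : Measurable (fun t : 𝓜 × 𝓧 => g₂ t.1 t.2))
    (hg₃meas : Measurable (fun t : ℕ × 𝓜 × 𝓧 => g₃ t.1 t.2.1 t.2.2))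
    (hg₄meas : Measurable (fun t : ℕ × 𝓧 => g₄ t.1 t.2))
    -- g₁⁰(X) = P(D = d | X)
    (hg₁ver : (fun ω => g₁ (X ω)) =ᵐ[P]
      P[(fun ω' => if D ω' = d then (1:ℝ) else 0) | MeasurableSpace.comap X inferInstance])
    -- g₂⁰(M,X) = P(D = d | M, X)
    (hg₂ver : (fun ω => g₂ (M ω) (X ω)) =ᵐ[P]
      P[(fun ω' => if D ω' = d then (1:ℝ) else 0) |
        MeasurableSpace.comap (fun ω' => (M ω', X ω')) inferInstance])
    -- g₃⁰(D,M,X) = P(Y ≤ a | D, M, X)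
    (hg₃ver : (fun ω => g₃ (D ω) (M ω) (X ω)) =ᵐ[P]
      P[(fun ω' => if Y ω' ≤ a then (1:ℝ) else 0) |
        MeasurableSpace.comap (fun ω' => (D ω', M ω', X ω')) inferInstance])
    -- g₄⁰(D,X) = E[g₃⁰(d, M, X) | D, X]
    (hg₄ver : (fun ω => g₄ (D ω) (X ω)) =ᵐ[P]
      P[(fun ω' => g₃ d (M ω') (X ω')) |
        MeasurableSpace.comap (fun ω' => (D ω', X ω')) inferInstance])
    -- overlap bands for the truth
    (hg₁band : ∀ᵐ ω ∂P, ε₁ ≤ g₁ (X ω) ∧ g₁ (X ω) ≤ 1 - ε₁)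
    (hg₂band : ∀ᵐ ω ∂P, ε₂ ≤ g₂ (M ω) (X ω) ∧ g₂ (M ω) (X ω) ≤ 1 - ε₂)
    (hg₃band : ∀ δ m x, g₃ δ m x ∈ Set.Icc (0:ℝ) 1)
    (hg₄band : ∀ δ x, g₄ δ x ∈ Set.Icc (0:ℝ) 1)
    -- bounded measurable perturbations staying in the overlap bands
    (h₁ : 𝓧 → ℝ) (h₂ : 𝓜 → 𝓧 → ℝ) (h₃ : 𝓜 → 𝓧 → ℝ) (h₄ : 𝓧 → ℝ)
    (hh₁meas : Measurable h₁)
    (hh₂meas : Measurable (fun t : 𝓜 × 𝓧 => h₂ t.1 t.2))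
    (hh₃meas : Measurable (fun t : 𝓜 × 𝓧 => h₃ t.1 t.2))
    (hh₄meas : Measurable h₄)
    (hh₁band : ∀ x, h₁ x ∈ Set.Icc ε₁ (1 - ε₁))
    (hh₂band : ∀ m x, h₂ m x ∈ Set.Icc ε₂ (1 - ε₂))
    (hh₃band : ∀ m x, h₃ m x ∈ Set.Icc (0:ℝ) 1)
    (hh₄band : ∀ x, h₄ x ∈ Set.Icc (0:ℝ) 1) :
    -- the Gateaux derivative of the mean score at the truth vanishes
    HasDerivAt (fun r : ℝ =>
      ∫ ω,
        ((if D ω = d then (1:ℝ) else 0)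
            * ((1 - (g₂ (M ω) (X ω) + r * (h₂ (M ω) (X ω) - g₂ (M ω) (X ω))))
                / ((1 - (g₁ (X ω) + r * (h₁ (X ω) - g₁ (X ω))))
                    * (g₂ (M ω) (X ω) + r * (h₂ (M ω) (X ω) - g₂ (M ω) (X ω)))))
            * ((if Y ω ≤ a then (1:ℝ) else 0)
                - (g₃ d (M ω) (X ω) + r * (h₃ (M ω) (X ω) - g₃ d (M ω) (X ω))))
          + (if D ω = d' then (1:ℝ) else 0)
              / (1 - (g₁ (X ω) + r * (h₁ (X ω) - g₁ (X ω))))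
            * ((g₃ d (M ω) (X ω) + r * (h₃ (M ω) (X ω) - g₃ d (M ω) (X ω)))
                - (g₄ d' (X ω) + r * (h₄ (X ω) - g₄ d' (X ω))))
          + (g₄ d' (X ω) + r * (h₄ (X ω) - g₄ d' (X ω)))) ∂P) 0 0
    ∧
    -- each directional derivative expectation is zero: direction t₁
    (∫ ω,
        ((if D ω = d then (1:ℝ) else 0) * (1 - g₂ (M ω) (X ω))
            / ((1 - g₁ (X ω)) ^ 2 * g₂ (M ω) (X ω))
            * ((if Y ω ≤ a then (1:ℝ) else 0) - g₃ d (M ω) (X ω))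
          + (if D ω = d' then (1:ℝ) else 0) / (1 - g₁ (X ω)) ^ 2
            * (g₃ d (M ω) (X ω) - g₄ d' (X ω)))
        * (h₁ (X ω) - g₁ (X ω)) ∂P = 0)
    ∧
    -- direction t₂
    (∫ ω,
        (-((if D ω = d then (1:ℝ) else 0)
            / ((1 - g₁ (X ω)) * g₂ (M ω) (X ω) ^ 2))
            * ((if Y ω ≤ a then (1:ℝ) else 0) - g₃ d (M ω) (X ω)))
        * (h₂ (M ω) (X ω) - g₂ (M ω) (X ω)) ∂P = 0)
    ∧
    -- direction t₃
    (∫ ω,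
        ((if D ω = d' then (1:ℝ) else 0) / (1 - g₁ (X ω))
          - (if D ω = d then (1:ℝ) else 0) * (1 - g₂ (M ω) (X ω))
              / ((1 - g₁ (X ω)) * g₂ (M ω) (X ω)))
        * (h₃ (M ω) (X ω) - g₃ d (M ω) (X ω)) ∂P = 0)
    ∧
    -- direction t₄
    (∫ ω,
        (1 - (if D ω = d' then (1:ℝ) else 0) / (1 - g₁ (X ω)))
        * (h₄ (X ω) - g₄ d' (X ω)) ∂P = 0) :=
  statement_11_general P Y D M X hY hD hM hX hD01 a d d' hd hd'def ε₁ ε₂ hε₁ hε₂ g₁ g₂ g₃ g₄ hg₁meas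
    hg₂meas hg₃meas hg₄meas hg₁ver hg₂ver hg₃ver hg₄ver hg₁band hg₂band hg₃band hg₄band h₁ h₂ h₃ h₄
    hh₁meas hh₂meas hh₃meas hh₄meas hh₁band hh₂band hh₃band hh₄band
end
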